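/- arXiv:1306.2594 — 7 statements merged into one kernel-verified Lean document; each statement's English description precedes it below -/
import Mathlib

section
/- Let (X,d) be a metric space, w₁, w₂ ∈ X, and let (x_i)_{i∈ℕ} be the sequence with x_i = w₁ if 2^{2j} ≤ i < 2^{2j+1} for some j ≥ 0 and x_i = w₂ otherwise. Then lim_{n→∞} (1/n) ∑_{k=1}^{n} d(x_k, x_{k+1}) = 0. -/
open Filter Real

theorem stmt_2 {X : Type*} [MetricSpace X] (w₁ w₂ : X) (x : ℕ → X)
    (hx₁ : ∀ i : ℕ, (∃ j : ℕ, 2 ^ (2 * j) ≤ i ∧ i < 2 ^ (2 * j + 1)) → x i = w₁)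
    (hx₂ : ∀ i : ℕ, ¬ (∃ j : ℕ, 2 ^ (2 * j) ≤ i ∧ i < 2 ^ (2 * j + 1)) → x i = w₂) :
    Filter.Tendsto
      (fun n : ℕ => (1 / (n : ℝ)) * ∑ k ∈ Finset.Icc 1 n, dist (x k) (x (k + 1)))
      Filter.atTop (nhds 0) := by
  classical
  set D := dist w₁ w₂ with hD
  have hD0 : 0 ≤ D := dist_nonneg
  have hval : ∀ i, x i = w₁ ∨ x i = w₂ := by
    intro i
    by_cases h : ∃ j, 2 ^ (2*j) ≤ i ∧ i < 2 ^ (2*j+1)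
    · exact Or.inl (hx₁ i h)
    · exact Or.inr (hx₂ i h)
  have hdist_le : ∀ k, dist (x k) (x (k+1)) ≤ D := by
    intro k
    rcases hval k with h1 | h1 <;> rcases hval (k+1) with h2 | h2 <;>
      simp [h1, h2, hD, dist_comm, dist_nonneg]
  have hzero : ∀ k, (¬ ∃ m, k + 1 = 2 ^ m) → dist (x k) (x (k+1)) = 0 := by
    intro k hpow
    have hiff : (∃ j, 2 ^ (2*j) ≤ k ∧ k < 2 ^ (2*j+1)) ↔
        (∃ j, 2 ^ (2*j) ≤ k+1 ∧ k+1 < 2 ^ (2*j+1)) := by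
      constructor
      · rintro ⟨j, h1, h2⟩
        refine ⟨j, le_trans h1 (Nat.le_succ k), ?_⟩
        rcases Nat.lt_or_ge (k+1) (2^(2*j+1)) with h | h
        · exact h
        · exact absurd ⟨2*j+1, by omega⟩ hpow
      · rintro ⟨j, h1, h2⟩
        refine ⟨j, ?_, by omega⟩
        rcases Nat.lt_or_ge k (2^(2*j)) with h | h
        · exact absurd ⟨2*j, by omega⟩ hpow
        · exact h
    by_cases h : ∃ j, 2 ^ (2*j) ≤ k ∧ k < 2 ^ (2*j+1)
    · rw [hx₁ k h, hx₁ (k+1) (hiff.mp h), dist_self]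
    · rw [hx₂ k h, hx₂ (k+1) (fun h' => h (hiff.mpr h')), dist_self]
  -- bound the sum by D * Nat.log 2 (n+1)
  have hsum : ∀ n : ℕ, ∑ k ∈ Finset.Icc 1 n, dist (x k) (x (k + 1))
      ≤ D * (Nat.log 2 (n+1) : ℝ) := by
    intro n
    have heq : ∑ k ∈ (Finset.Icc 1 n).filter (fun k => ∃ m, k+1 = 2^m),
        dist (x k) (x (k+1)) = ∑ k ∈ Finset.Icc 1 n, dist (x k) (x (k + 1)) := by
      refine Finset.sum_filter_of_ne ?_
      intro k _ hne
      by_contra hpow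
      exact hne (hzero k hpow)
    rw [← heq]
    calc ∑ k ∈ (Finset.Icc 1 n).filter (fun k => ∃ m, k+1 = 2^m), dist (x k) (x (k+1))
        ≤ ∑ _k ∈ (Finset.Icc 1 n).filter (fun k => ∃ m, k+1 = 2^m), D :=
          Finset.sum_le_sum (fun k _ => hdist_le k)
      _ = ((Finset.Icc 1 n).filter (fun k => ∃ m, k+1 = 2^m)).card * D := by
          rw [Finset.sum_const, nsmul_eq_mul]
      _ ≤ D * (Nat.log 2 (n+1) : ℝ) := by
          have hcard : ((Finset.Icc 1 n).filter (fun k => ∃ m, k+1 = 2^m)).card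
              ≤ Nat.log 2 (n+1) := by
            have := Finset.card_le_card_of_injOn (fun k => Nat.log 2 (k+1))
              (s := (Finset.Icc 1 n).filter (fun k => ∃ m, k+1 = 2^m))
              (t := Finset.Icc 1 (Nat.log 2 (n+1))) ?_ ?_
            · simpa using this
            · intro k hk
              simp only [Finset.mem_coe, Finset.mem_filter, Finset.mem_Icc] at hk ⊢
              obtain ⟨⟨hk1, hkn⟩, m, hm⟩ := hk
              constructor
              · have hm1 : 1 ≤ m := by
                  rcases m with _ | m
                  · omega
                  · omega
                calc 1 ≤ m := hm1
                  _ = Nat.log 2 (k+1) := by rw [hm, Nat.log_pow (by norm_num)]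
              · exact Nat.log_mono_right (by omega)
            · intro a ha b hb hab
              simp only [Finset.coe_filter, Set.mem_setOf_eq, Finset.mem_Icc] at ha hb
              obtain ⟨_, ma, hma⟩ := ha
              obtain ⟨_, mb, hmb⟩ := hb
              have hmm : ma = mb := by
                simpa [hma, hmb, Nat.log_pow (show 1 < 2 by norm_num)] using hab
              subst hmm
              omega
          rw [mul_comm D]
          have hc' : (((Finset.Icc 1 n).filter (fun k => ∃ m, k+1 = 2^m)).card : ℝ)
              ≤ (Nat.log 2 (n+1) : ℝ) := by exact_mod_cast hcard
          exact mul_le_mul_of_nonneg_right hc' hD0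
  -- the log bound tends to zero
  have hlog : Tendsto (fun n : ℕ => D * ((Nat.log 2 (n+1) : ℝ) / n)) atTop (nhds 0) := by
    have h1 : Tendsto (fun y : ℝ => Real.log y / (1 * y + (-1))) atTop (nhds 0) := by
      simpa using Real.tendsto_pow_log_div_mul_add_atTop 1 (-1) 1 one_ne_zero
    have h2 : Tendsto (fun n : ℕ => Real.log (n+1) / n) atTop (nhds 0) := by
      have hc : Tendsto (fun n : ℕ => ((n : ℝ) + 1)) atTop atTop :=
        tendsto_atTop_add_const_right _ 1 tendsto_natCast_atTop_atTop
      have := h1.comp hc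
      refine this.congr (fun n => ?_)
      simp [Function.comp]
    have h3 : Tendsto (fun n : ℕ => (Real.log 2)⁻¹ * (Real.log (n+1) / n)) atTop (nhds 0) := by
      simpa using h2.const_mul (Real.log 2)⁻¹
    have h4 : Tendsto (fun n : ℕ => (Nat.log 2 (n+1) : ℝ) / n) atTop (nhds 0) := by
      apply squeeze_zero' (Filter.Eventually.of_forall fun n => ?_)
        (Filter.Eventually.of_forall fun n => ?_) h3
      · positivity
      · have hle : (Nat.log 2 (n+1) : ℝ) ≤ Real.logb 2 (n+1) := by
          have := Real.natLog_le_logb (n+1) 2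
          simpa using this
        have hlogb : Real.logb 2 ((n:ℝ)+1) = (Real.log 2)⁻¹ * Real.log ((n:ℝ)+1) := by
          rw [Real.logb, div_eq_inv_mul]
        rw [← mul_div_assoc, ← hlogb]
        rcases Nat.eq_zero_or_pos n with h | h
        · simp [h]
        · have hn0 : (0:ℝ) < n := by exact_mod_cast h
          gcongr
    simpa using h4.const_mul D
  -- squeeze
  refine squeeze_zero' (Filter.Eventually.of_forall fun n => ?_) ?_ hlog
  · have : 0 ≤ ∑ k ∈ Finset.Icc 1 n, dist (x k) (x (k + 1)) :=
      Finset.sum_nonneg fun k _ => dist_nonneg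
    positivity
  · filter_upwards [eventually_ge_atTop 1] with n hn
    have hn0 : (0:ℝ) < n := by exact_mod_cast hn
    calc (1 / (n:ℝ)) * ∑ k ∈ Finset.Icc 1 n, dist (x k) (x (k + 1))
        ≤ (1 / (n:ℝ)) * (D * (Nat.log 2 (n+1) : ℝ)) := by
          have h0 : (0:ℝ) ≤ 1 / (n:ℝ) := by positivity
          exact mul_le_mul_of_nonneg_left (hsum n) h0
      _ = D * ((Nat.log 2 (n+1) : ℝ) / n) := by field_simp
end

section
/- Let (X,d) be a metric space, w₁, w₂ ∈ X, and let (x_i)_{i∈ℕ} be the block sequence with x_i = w₁ if 2^{2j} ≤ i < 2^{2j+1} for some j ≥ 0 and x_i = w₂ otherwise. Then for every δ > 0 there exists N ∈ ℕ such that for all n ≥ N and all m ∈ ℕ, (1/n) ∑_{k=1}^{n} d(x_{m+k}, x_{m+k+1}) < δ. -/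
/-- `k² ≤ 2^k` for `k ≥ 4`. -/
lemma aux_sq_le_two_pow : ∀ k : ℕ, 4 ≤ k → k * k ≤ 2 ^ k := by
  intro k hk
  induction k with
  | zero => omega
  | succ n ih =>
    rcases Nat.lt_or_ge n 4 with h | h
    · have hn3 : n = 3 := by omega
      subst hn3; norm_num
    · have h1 := ih (by omega)
      have h2 : 2 ^ (n + 1) = 2 * 2 ^ n := by ring
      nlinarith

/-- Characterization: for `i` in the dyadic block `[2^a, 2^(a+1))`, the block predicate
holds iff `a` is even. -/
lemma aux_block_char (a i : ℕ) (h1 : 2 ^ a ≤ i) (h2 : i < 2 ^ (a + 1)) :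
    (∃ j : ℕ, 2 ^ (2 * j) ≤ i ∧ i < 2 ^ (2 * j + 1)) ↔ Even a := by
  constructor
  · rintro ⟨j, hj1, hj2⟩
    have hlt1 : 2 ^ (2 * j) < 2 ^ (a + 1) := lt_of_le_of_lt hj1 h2
    have hlt2 : 2 ^ a < 2 ^ (2 * j + 1) := lt_of_le_of_lt h1 hj2
    have e1 : 2 * j < a + 1 := (Nat.pow_lt_pow_iff_right (by norm_num)).mp hlt1
    have e2 : a < 2 * j + 1 := (Nat.pow_lt_pow_iff_right (by norm_num)).mp hlt2
    have : a = 2 * j := by omega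
    exact ⟨j, by omega⟩
  · rintro ⟨r, hr⟩
    refine ⟨r, ?_, ?_⟩
    · rwa [show 2 * r = a by omega]
    · rwa [show 2 * r + 1 = a + 1 by omega]

/-- If `i+1` is not a power of two, then `i` and `i+1` lie in the same dyadic block,
so the block predicates agree. -/
lemma aux_same_block (i : ℕ) (h : ¬ ∃ a : ℕ, i + 1 = 2 ^ a) :
    ((∃ j : ℕ, 2 ^ (2 * j) ≤ i ∧ i < 2 ^ (2 * j + 1)) ↔
      (∃ j : ℕ, 2 ^ (2 * j) ≤ i + 1 ∧ i + 1 < 2 ^ (2 * j + 1))) := by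
  have hi : 1 ≤ i := by
    by_contra hi
    exact h ⟨0, by omega⟩
  set a := Nat.log 2 i with ha
  have h1 : 2 ^ a ≤ i := Nat.pow_log_le_self 2 (by omega)
  have h2 : i < 2 ^ (a + 1) := Nat.lt_pow_succ_log_self (by norm_num) i
  have h3 : i + 1 < 2 ^ (a + 1) := by
    rcases Nat.lt_or_ge (i + 1) (2 ^ (a + 1)) with h' | h'
    · exact h'
    · exact absurd ⟨a + 1, by omega⟩ h
  have h4 : 2 ^ a ≤ i + 1 := by omega
  rw [aux_block_char a i h1 h2, aux_block_char a (i + 1) h4 h3]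

theorem stmt_3 {X : Type*} [MetricSpace X] (w₁ w₂ : X) (x : ℕ → X)
    (hx₁ : ∀ i : ℕ, (∃ j : ℕ, 2 ^ (2 * j) ≤ i ∧ i < 2 ^ (2 * j + 1)) → x i = w₁)
    (hx₂ : ∀ i : ℕ, ¬ (∃ j : ℕ, 2 ^ (2 * j) ≤ i ∧ i < 2 ^ (2 * j + 1)) → x i = w₂) :
    ∀ δ : ℝ, 0 < δ → ∃ N : ℕ, ∀ n : ℕ, N ≤ n → ∀ m : ℕ,
      (1 / (n : ℝ)) * ∑ k ∈ Finset.Icc 1 n, dist (x (m + k)) (x (m + k + 1)) < δ := by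
  intro δ hδ
  set D : ℝ := dist w₁ w₂ with hDdef
  have hD : 0 ≤ D := dist_nonneg
  -- each sequence value is w₁ or w₂
  have hval : ∀ i : ℕ, x i = w₁ ∨ x i = w₂ := by
    intro i
    by_cases hp : ∃ j : ℕ, 2 ^ (2 * j) ≤ i ∧ i < 2 ^ (2 * j + 1)
    · exact Or.inl (hx₁ i hp)
    · exact Or.inr (hx₂ i hp)
  have hdistD : ∀ i : ℕ, dist (x i) (x (i + 1)) ≤ D := by
    intro i
    rcases hval i with h1 | h1 <;> rcases hval (i + 1) with h2 | h2 <;>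
      rw [h1, h2] <;> simp [hDdef, dist_comm, dist_nonneg]
  have hdist0 : ∀ i : ℕ, (¬ ∃ a : ℕ, i + 1 = 2 ^ a) → x i = x (i + 1) := by
    intro i hi
    have hiff := aux_same_block i hi
    by_cases hp : ∃ j : ℕ, 2 ^ (2 * j) ≤ i ∧ i < 2 ^ (2 * j + 1)
    · rw [hx₁ i hp, hx₁ (i + 1) (hiff.mp hp)]
    · rw [hx₂ i hp, hx₂ (i + 1) (fun h => hp (hiff.mpr h))]
  obtain ⟨K, hK⟩ := exists_nat_ge (7 * D / δ)
  have hK' : 7 * D ≤ δ * K := by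
    rw [div_le_iff₀ hδ] at hK
    linarith
  refine ⟨(K + 1) ^ 2, fun n hn m => ?_⟩
  have hn1 : 1 ≤ n := le_trans (Nat.one_le_pow 2 (K+1) (by omega)) hn
  have hsqK : K + 1 ≤ Nat.sqrt n := Nat.le_sqrt.mpr (by nlinarith)
  -- the set of "boundary" indices
  classical
  set S : Finset ℕ := (Finset.Icc 1 n).filter (fun k => ∃ a : ℕ, m + k + 1 = 2 ^ a) with hS
  -- bound the sum by D * #S
  have hsum : ∑ k ∈ Finset.Icc 1 n, dist (x (m + k)) (x (m + k + 1)) ≤ D * S.card := by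
    have step : ∑ k ∈ Finset.Icc 1 n, dist (x (m + k)) (x (m + k + 1)) ≤
        ∑ k ∈ Finset.Icc 1 n, (if ∃ a : ℕ, m + k + 1 = 2 ^ a then D else 0) := by
      apply Finset.sum_le_sum
      intro k _
      by_cases hp : ∃ a : ℕ, m + k + 1 = 2 ^ a
      · simp only [hp, if_true]
        exact hdistD (m + k)
      · simp only [hp, if_false]
        rw [hdist0 (m + k) hp, dist_self]
    calc ∑ k ∈ Finset.Icc 1 n, dist (x (m + k)) (x (m + k + 1))
        ≤ ∑ k ∈ Finset.Icc 1 n, (if ∃ a : ℕ, m + k + 1 = 2 ^ a then D else 0) := step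
      _ = ∑ k ∈ S, D := (Finset.sum_filter _ _).symm
      _ = S.card • D := Finset.sum_const D
      _ = D * S.card := by rw [nsmul_eq_mul]; ring
  -- bound #S by sqrt n + 6
  have hcard : S.card ≤ Nat.sqrt n + 6 := by
    set p := Nat.log 2 (m + 2) with hp
    set q := Nat.log 2 (m + n + 1) with hq
    have hpq : p ≤ q := Nat.log_mono_right (by omega)
    have hinj : S.card ≤ (Finset.Icc p q).card := by
      apply Finset.card_le_card_of_injOn (fun k => Nat.log 2 (m + k + 1))
      · intro k hk
        simp only [hS, Finset.mem_coe, Finset.mem_filter, Finset.mem_Icc] at hk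
        obtain ⟨⟨hk1, hk2⟩, a, hka⟩ := hk
        simp only [Finset.mem_coe, Finset.mem_Icc]
        exact ⟨Nat.log_mono_right (by omega), Nat.log_mono_right (by omega)⟩
      · intro k₁ hk₁ k₂ hk₂ hfk
        simp only [hS, Finset.coe_filter, Set.mem_setOf_eq, Finset.mem_Icc] at hk₁ hk₂
        obtain ⟨_, a₁, ha₁⟩ := hk₁
        obtain ⟨_, a₂, ha₂⟩ := hk₂
        have e₁ : m + k₁ + 1 = 2 ^ Nat.log 2 (m + k₁ + 1) := by
          rw [ha₁, Nat.log_pow (by norm_num)]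
        have e₂ : m + k₂ + 1 = 2 ^ Nat.log 2 (m + k₂ + 1) := by
          rw [ha₂, Nat.log_pow (by norm_num)]
        have hfk2 : Nat.log 2 (m + k₁ + 1) = Nat.log 2 (m + k₂ + 1) := hfk
        rw [hfk2, ← e₂] at e₁
        omega
    have hIcc : (Finset.Icc p q).card = q - p + 1 := by
      rw [Nat.card_Icc]; omega
    -- key: q - p ≤ sqrt n + 5
    have hqp : q - p ≤ Nat.sqrt n + 5 := by
      rcases Nat.eq_or_lt_of_le hpq with heq | hlt
      · omega
      · -- t := q - p ≥ 1, s := q - p - 1, 2^s ≤ n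
        have h2q : 2 ^ q ≤ m + n + 1 := Nat.pow_log_le_self 2 (by omega)
        have h2p : m + 2 < 2 ^ (p + 1) := Nat.lt_pow_succ_log_self (by norm_num) (m + 2)
        have hsplit : 2 ^ q = 2 ^ (p + 1) * 2 ^ (q - p - 1) := by
          rw [← pow_add]
          congr 1
          omega
        have hs : 2 ^ (q - p - 1) ≤ n := by
          by_contra hcon
          push_neg at hcon
          have : (m + 3) * (n + 1) ≤ m + n + 1 := by
            calc (m + 3) * (n + 1) ≤ 2 ^ (p + 1) * 2 ^ (q - p - 1) :=
                  Nat.mul_le_mul (by omega) (by omega)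
              _ = 2 ^ q := hsplit.symm
              _ ≤ m + n + 1 := h2q
          nlinarith
        set s := q - p - 1 with hsdef
        rcases Nat.lt_or_ge s 4 with hsmall | hbig
        · omega
        · have : s * s ≤ 2 ^ s := aux_sq_le_two_pow s hbig
          have hssqrt : s ≤ Nat.sqrt n := Nat.le_sqrt.mpr (le_trans this hs)
          omega
    omega
  -- final real arithmetic
  have hnR : (0 : ℝ) < n := by exact_mod_cast hn1
  have hs1 : (1 : ℝ) ≤ (Nat.sqrt n : ℝ) := by
    exact_mod_cast show 1 ≤ Nat.sqrt n by omega
  have hs2 : (Nat.sqrt n : ℝ) * (Nat.sqrt n : ℝ) ≤ (n : ℝ) := by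
    have h := Nat.sqrt_le' n
    rw [pow_two] at h
    exact_mod_cast h
  have hs3 : (K : ℝ) + 1 ≤ (Nat.sqrt n : ℝ) := by exact_mod_cast hsqK
  have hcardR : (S.card : ℝ) ≤ (Nat.sqrt n : ℝ) + 6 := by exact_mod_cast hcard
  have hkey : D * (S.card : ℝ) < δ * n := by
    have c1 : D * (S.card : ℝ) ≤ D * ((Nat.sqrt n : ℝ) + 6) :=
      mul_le_mul_of_nonneg_left hcardR hD
    have c2 : D * ((Nat.sqrt n : ℝ) + 6) ≤ 7 * D * (Nat.sqrt n : ℝ) := by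
      nlinarith [mul_nonneg hD (sub_nonneg.mpr hs1)]
    have h7 : 7 * D < δ * ((K : ℝ) + 1) := by nlinarith
    have c3 : 7 * D * (Nat.sqrt n : ℝ) < δ * ((K : ℝ) + 1) * (Nat.sqrt n : ℝ) :=
      mul_lt_mul_of_pos_right h7 (by linarith)
    have c4 : δ * ((K : ℝ) + 1) * (Nat.sqrt n : ℝ) ≤ δ * ((Nat.sqrt n : ℝ) * (Nat.sqrt n : ℝ)) := by
      nlinarith [mul_nonneg (le_of_lt hδ) (show (0:ℝ) ≤ (Nat.sqrt n : ℝ) by linarith)]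
    have c5 : δ * ((Nat.sqrt n : ℝ) * (Nat.sqrt n : ℝ)) ≤ δ * n := by nlinarith
    linarith
  have hfinal : ∑ k ∈ Finset.Icc 1 n, dist (x (m + k)) (x (m + k + 1)) < δ * n :=
    lt_of_le_of_lt hsum hkey
  have hpos : (0 : ℝ) < 1 / n := by positivity
  have h2 := mul_lt_mul_of_pos_left hfinal hpos
  have h3 : 1 / (n : ℝ) * (δ * n) = δ := by field_simp
  rw [h3] at h2
  exact h2
end

section
/- The identity map on a metric space containing two points at positive distance does not have the average shadowing property. Precisely: let f = id on a metric space (X,d), and suppose w₁, w₂ ∈ X with d(w₁,w₂) = 3ε > 0. Then there exists a sequence (x_i)_{i∈ℕ} with lim_{n→∞} (1/n) ∑_{k=1}^{n} d(f(x_k), x_{k+1}) = 0 (so it is a δ-average-pseudo-orbit for every δ > 0), but for every z ∈ X one has limsup_{n→∞} (1/n) ∑_{i=1}^{n} d(f^i(z), x_i) > ε/2. -/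
open Filter

theorem stmt_6 {X : Type*} [MetricSpace X] (f : X → X) (hf : ∀ a, f a = a)
    (ε : ℝ) (hε : 0 < ε) (w₁ w₂ : X) (hw : dist w₁ w₂ = 3 * ε) :
    ∃ x : ℕ → X,
      Filter.Tendsto
        (fun n : ℕ => (1 / (n : ℝ)) * ∑ k ∈ Finset.Icc 1 n, dist (f (x k)) (x (k + 1)))
        Filter.atTop (nhds 0) ∧
      ∀ z : X,
        ε / 2 <
          Filter.limsup
            (fun n : ℕ => (1 / (n : ℝ)) * ∑ i ∈ Finset.Icc 1 n, dist (f^[i] z) (x i))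
            Filter.atTop := by
  classical
  set b : ℕ → X := fun i => if Nat.log 2 i % 2 = 0 then w₁ else w₂ with hb
  have hdistb : ∀ i j : ℕ, dist (b i) (b j) ≤ 3 * ε := by
    intro i j
    simp only [hb]
    split_ifs <;> simp [hw, dist_comm w₂ w₁] <;> positivity
  refine ⟨b, ?_, ?_⟩
  · -- pseudo-orbit averages tend to 0
    have hsum : ∀ n : ℕ, ∑ k ∈ Finset.Icc 1 n, dist (b k) (b (k + 1)) ≤
        3 * ε * (Nat.log 2 (n + 1) : ℝ) := by
      intro n
      induction n with
      | zero => simp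
      | succ n ih =>
        rw [Finset.sum_Icc_succ_top (by omega : 1 ≤ n + 1)]
        by_cases hp : ∃ m, n + 2 = 2 ^ m
        · obtain ⟨m, hm⟩ := hp
          have hm1 : 1 ≤ m := by
            rcases Nat.eq_zero_or_pos m with h | h
            · simp [h] at hm
            · exact h
          have hpow : 2 ^ (m - 1) * 2 = 2 ^ m := by
            rw [← pow_succ]; congr 1; omega
          have hone : 1 ≤ 2 ^ (m - 1) := Nat.one_le_two_pow
          have hlog2 : Nat.log 2 (n + 2) = m := by
            rw [hm, Nat.log_pow one_lt_two]
          have hlog1 : Nat.log 2 (n + 1) = m - 1 := by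
            apply Nat.log_eq_of_pow_le_of_lt_pow
            · omega
            · have : m - 1 + 1 = m := by omega
              rw [this]; omega
          have hmono : (Nat.log 2 (n + 1) : ℝ) + 1 = (Nat.log 2 (n + 2) : ℝ) := by
            rw [hlog1, hlog2]
            have : (m - 1 : ℕ) + 1 = m := by omega
            exact_mod_cast congrArg (Nat.cast (R := ℝ)) this
          have := hdistb (n + 1) (n + 2)
          calc (∑ k ∈ Finset.Icc 1 n, dist (b k) (b (k + 1))) + dist (b (n + 1)) (b (n + 2))
              ≤ 3 * ε * (Nat.log 2 (n + 1) : ℝ) + 3 * ε := by linarith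
            _ = 3 * ε * (Nat.log 2 (n + 2) : ℝ) := by rw [← hmono]; ring
        · have h1 : 2 ^ Nat.log 2 (n + 1) ≤ n + 1 := Nat.pow_log_le_self 2 (by omega)
          have h2 : n + 1 < 2 ^ (Nat.log 2 (n + 1) + 1) := Nat.lt_pow_succ_log_self one_lt_two _
          have h3 : n + 2 ≠ 2 ^ (Nat.log 2 (n + 1) + 1) := fun h => hp ⟨_, h⟩
          have hlog : Nat.log 2 (n + 2) = Nat.log 2 (n + 1) :=
            Nat.log_eq_of_pow_le_of_lt_pow (by omega) (by omega)
          have hd0 : dist (b (n + 1)) (b (n + 2)) = 0 := by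
            simp only [hb]
            have : n + 1 + 1 = n + 2 := rfl
            rw [this, hlog]
            simp
          have hmono : (Nat.log 2 (n + 1) : ℝ) ≤ (Nat.log 2 (n + 2) : ℝ) := by
            rw [hlog]
          rw [hd0]
          have h3e : 0 ≤ 3 * ε := by positivity
          calc (∑ k ∈ Finset.Icc 1 n, dist (b k) (b (k + 1))) + 0
              = ∑ k ∈ Finset.Icc 1 n, dist (b k) (b (k + 1)) := by ring
            _ ≤ 3 * ε * (Nat.log 2 (n + 1) : ℝ) := ih
            _ ≤ 3 * ε * (Nat.log 2 (n + 2) : ℝ) := by nlinarith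
    -- upper bound function tends to 0
    have hlogtendsto : Tendsto (fun n : ℕ => Real.log ((n : ℝ) + 1) / (n : ℝ))
        atTop (nhds 0) := by
      have h1 : Tendsto (fun n : ℕ => Real.log ((n : ℝ) + 1) / ((n : ℝ) + 1))
          atTop (nhds 0) := by
        have hlo := Real.isLittleO_log_id_atTop.tendsto_div_nhds_zero
        have hcomp : Tendsto (fun n : ℕ => (n : ℝ) + 1) atTop atTop :=
          tendsto_atTop_add_const_right _ 1 tendsto_natCast_atTop_atTop
        exact hlo.comp hcomp
      have h2 : Tendsto (fun n : ℕ => ((n : ℝ) + 1) / (n : ℝ)) atTop (nhds 1) := by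
        have : Tendsto (fun n : ℕ => 1 + 1 / (n : ℝ)) atTop (nhds (1 + 0)) :=
          tendsto_const_nhds.add tendsto_one_div_atTop_nhds_zero_nat
        rw [add_zero] at this
        apply this.congr'
        filter_upwards [eventually_ge_atTop 1] with n hn
        have hn0 : (n : ℝ) ≠ 0 := by positivity
        field_simp
      have := h1.mul h2
      rw [zero_mul] at this
      apply this.congr'
      filter_upwards [eventually_ge_atTop 1] with n hn
      have hn0 : (n : ℝ) ≠ 0 := by positivity
      have hn1 : (n : ℝ) + 1 ≠ 0 := by positivity
      field_simp
    have hC : Tendsto (fun n : ℕ => (3 * ε / Real.log 2) * (Real.log ((n : ℝ) + 1) / (n : ℝ)))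
        atTop (nhds 0) := by
      have := hlogtendsto.const_mul (3 * ε / Real.log 2)
      rwa [mul_zero] at this
    apply tendsto_of_tendsto_of_tendsto_of_le_of_le' tendsto_const_nhds hC
    · filter_upwards with n
      have : ∀ k ∈ Finset.Icc 1 n, (0 : ℝ) ≤ dist (f (b k)) (b (k + 1)) :=
        fun k _ => dist_nonneg
      have := Finset.sum_nonneg this
      positivity
    · filter_upwards [eventually_ge_atTop 1] with n hn
      have hn0 : (0 : ℝ) < n := by exact_mod_cast hn
      have hrw : ∑ k ∈ Finset.Icc 1 n, dist (f (b k)) (b (k + 1)) =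
          ∑ k ∈ Finset.Icc 1 n, dist (b k) (b (k + 1)) := by
        apply Finset.sum_congr rfl
        intro k _; rw [hf]
      rw [hrw]
      have hlogb : (Nat.log 2 (n + 1) : ℝ) ≤ Real.logb 2 ((n : ℝ) + 1) := by
        have := Real.natLog_le_logb (n + 1) 2
        rwa [Nat.cast_add, Nat.cast_one] at this
      have hlog2pos : 0 < Real.log 2 := Real.log_pos (by norm_num)
      have hS : ∑ k ∈ Finset.Icc 1 n, dist (b k) (b (k + 1)) ≤
          3 * ε * Real.logb 2 ((n : ℝ) + 1) := by
        have := hsum n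
        nlinarith
      rw [Real.logb] at hS
      rw [div_mul_eq_mul_div, div_mul_eq_mul_div, one_mul]
      calc (∑ k ∈ Finset.Icc 1 n, dist (b k) (b (k + 1))) / (n : ℝ)
          ≤ (3 * ε * (Real.log ((n : ℝ) + 1) / Real.log 2)) / (n : ℝ) := by gcongr
        _ = 3 * ε * (Real.log ((n : ℝ) + 1) / (n : ℝ)) / Real.log 2 := by ring
  · -- limsup part
    intro z
    have hiter : ∀ i : ℕ, f^[i] z = z := fun i => Function.iterate_fixed (hf z) i
    set u : ℕ → ℝ :=
      fun n : ℕ => (1 / (n : ℝ)) * ∑ i ∈ Finset.Icc 1 n, dist (f^[i] z) (b i) with hu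
    have hM : ∀ i : ℕ, dist z (b i) ≤ max (dist z w₁) (dist z w₂) := by
      intro i
      simp only [hb]
      split_ifs
      · exact le_max_left _ _
      · exact le_max_right _ _
    have hMnonneg : 0 ≤ max (dist z w₁) (dist z w₂) :=
      le_trans dist_nonneg (le_max_left _ _)
    have hbdd : IsBoundedUnder (· ≤ ·) atTop u := by
      apply isBoundedUnder_of
      refine ⟨max (dist z w₁) (dist z w₂), fun n => ?_⟩
      rcases Nat.eq_zero_or_pos n with h | h
      · simp [hu, h, hMnonneg]
      · have hn0 : (0 : ℝ) < n := by exact_mod_cast h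
        have hS : ∑ i ∈ Finset.Icc 1 n, dist (f^[i] z) (b i) ≤
            (n : ℝ) * max (dist z w₁) (dist z w₂) := by
          calc ∑ i ∈ Finset.Icc 1 n, dist (f^[i] z) (b i)
              ≤ ∑ i ∈ Finset.Icc 1 n, max (dist z w₁) (dist z w₂) := by
                apply Finset.sum_le_sum
                intro i _
                rw [hiter]
                exact hM i
            _ = (n : ℝ) * max (dist z w₁) (dist z w₂) := by
                rw [Finset.sum_const, Nat.card_Icc]
                simp [h, nsmul_eq_mul]
        simp only [hu]
        rw [one_div, inv_mul_le_iff₀ hn0]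
        linarith [hS]
    -- choose the far point
    have htri : 3 * ε ≤ dist z w₁ + dist z w₂ := by
      rw [← hw]
      calc dist w₁ w₂ ≤ dist w₁ z + dist z w₂ := dist_triangle _ _ _
        _ = dist z w₁ + dist z w₂ := by rw [dist_comm w₁ z]
    obtain ⟨r, hr2, w', hfarb, hfar⟩ :
        ∃ r : ℕ, r < 2 ∧ ∃ w' : X, (∀ i, Nat.log 2 i % 2 = r → b i = w') ∧
          3 * ε / 2 ≤ dist z w' := by
      by_cases h : 3 * ε / 2 ≤ dist z w₁
      · exact ⟨0, by norm_num, w₁, fun i hi => by simp [hb, hi], h⟩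
      · refine ⟨1, by norm_num, w₂, fun i hi => ?_, by linarith⟩
        simp only [hb]
        rw [if_neg (by omega)]
    have hfreq : ∃ᶠ n in atTop, 3 * ε / 4 ≤ u n := by
      rw [frequently_atTop]
      intro N
      set m : ℕ := 2 * N + 2 + r with hm
      have hmr : m % 2 = r := by omega
      have hmN : N + 1 ≤ 2 ^ m := by
        have := Nat.lt_two_pow_self (n := m)
        omega
      refine ⟨2 ^ (m + 1) - 1, ?_, ?_⟩
      · have h1 : 2 ^ m < 2 ^ (m + 1) := Nat.pow_lt_pow_right one_lt_two (by omega)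
        omega
      · set n : ℕ := 2 ^ (m + 1) - 1 with hn
        have hpow : 2 ^ (m + 1) = 2 * 2 ^ m := by rw [pow_succ]; ring
        have h2m : 1 ≤ 2 ^ m := Nat.one_le_two_pow
        have hn1 : 1 ≤ n := by omega
        have hsub : Finset.Icc (2 ^ m) n ⊆ Finset.Icc 1 n := by
          apply Finset.Icc_subset_Icc_left
          omega
        have hval : ∀ i ∈ Finset.Icc (2 ^ m) n, dist (f^[i] z) (b i) = dist z w' := by
          intro i hi
          rw [Finset.mem_Icc] at hi
          have hlogi : Nat.log 2 i = m := by
            apply Nat.log_eq_of_pow_le_of_lt_pow hi.1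
            omega
          rw [hiter, hfarb i (by rw [hlogi]; exact hmr)]
        have hcard : (Finset.Icc (2 ^ m) n).card = 2 ^ m := by
          rw [Nat.card_Icc]
          omega
        have hSlow : (2 ^ m : ℝ) * dist z w' ≤
            ∑ i ∈ Finset.Icc 1 n, dist (f^[i] z) (b i) := by
          calc (2 ^ m : ℝ) * dist z w'
              = ∑ i ∈ Finset.Icc (2 ^ m) n, dist (f^[i] z) (b i) := by
                rw [Finset.sum_congr rfl hval, Finset.sum_const, hcard, nsmul_eq_mul]
                push_cast
                ring
            _ ≤ ∑ i ∈ Finset.Icc 1 n, dist (f^[i] z) (b i) :=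
                Finset.sum_le_sum_of_subset_of_nonneg hsub
                  (fun i _ _ => dist_nonneg)
        have hn0 : (0 : ℝ) < n := by exact_mod_cast hn1
        have hnle : (n : ℝ) ≤ 2 * (2 ^ m : ℝ) := by
          have : n ≤ 2 * 2 ^ m := by omega
          exact_mod_cast this
        simp only [hu]
        rw [one_div, le_inv_mul_iff₀ hn0]
        have h1 : (n : ℝ) * (3 * ε / 4) ≤ (2 * (2 ^ m : ℝ)) * (3 * ε / 4) := by
          apply mul_le_mul_of_nonneg_right hnle
          positivity
        have h3 : (2 ^ m : ℝ) * (3 * ε / 2) ≤ (2 ^ m : ℝ) * dist z w' := by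
          apply mul_le_mul_of_nonneg_left hfar
          positivity
        calc (n : ℝ) * (3 * ε / 4) ≤ (2 ^ m : ℝ) * dist z w' := by nlinarith
          _ ≤ _ := hSlow
    have hlimsup : 3 * ε / 4 ≤ limsup u atTop :=
      le_limsup_of_frequently_le hfreq hbdd
    calc ε / 2 < 3 * ε / 4 := by linarith
      _ ≤ _ := hlimsup
end

section
/- The identity map on a metric space containing two points at positive distance does not have the asymptotic average shadowing property. Precisely: let f = id on (X,d) and w₁, w₂ ∈ X with d(w₁,w₂) > 0. Then there exists a sequence (x_i)_{i∈ℕ} with lim_{n→∞} (1/n) ∑_{k=1}^{n} d(f(x_k), x_{k+1}) = 0, but for every z ∈ X, limsup_{n→∞} (1/n) ∑_{i=1}^{n} d(f^i(z), x_i) > 0. -/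
open Filter Finset

section AAS
variable {X : Type*} [MetricSpace X]

noncomputable def xseq (w₁ w₂ : X) (i : ℕ) : X :=
  if Nat.log 2 i % 2 = 0 then w₁ else w₂

lemma xseq_dist_le (w₁ w₂ : X) (i j : ℕ) :
    dist (xseq w₁ w₂ i) (xseq w₁ w₂ j) ≤ dist w₁ w₂ := by
  unfold xseq
  split_ifs <;> simp [dist_comm, dist_nonneg]

lemma xseq_mem (w₁ w₂ : X) (i : ℕ) : xseq w₁ w₂ i = w₁ ∨ xseq w₁ w₂ i = w₂ := by
  unfold xseq; split_ifs <;> simp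

lemma xseq_block (w₁ w₂ : X) {k i : ℕ} (h1 : 2 ^ k ≤ i) (h2 : i < 2 ^ (k + 1)) :
    xseq w₁ w₂ i = if k % 2 = 0 then w₁ else w₂ := by
  unfold xseq
  rw [Nat.log_eq_of_pow_le_of_lt_pow h1 h2]

lemma xseq_ne_pow (w₁ w₂ : X) {i : ℕ} (h : xseq w₁ w₂ i ≠ xseq w₁ w₂ (i + 1)) :
    i + 1 = 2 ^ Nat.log 2 (i + 1) := by
  by_contra hne
  apply h
  have hle : 2 ^ Nat.log 2 (i + 1) ≤ i + 1 := Nat.pow_log_le_self 2 (by omega)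
  have hle' : 2 ^ Nat.log 2 (i + 1) ≤ i := by omega
  have hi0 : i ≠ 0 := by
    have := Nat.one_le_two_pow (n := Nat.log 2 (i + 1))
    omega
  have h1 : Nat.log 2 (i + 1) ≤ Nat.log 2 i := by
    rw [Nat.le_log_iff_pow_le one_lt_two hi0]; exact hle'
  have h2 : Nat.log 2 i ≤ Nat.log 2 (i + 1) := Nat.log_mono_right (by omega)
  have : Nat.log 2 i = Nat.log 2 (i + 1) := le_antisymm h2 h1
  unfold xseq
  rw [this]

lemma xseq_sum_bound (w₁ w₂ : X) (n : ℕ) :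
    ∑ k ∈ Icc 1 n, dist (xseq w₁ w₂ k) (xseq w₁ w₂ (k + 1))
      ≤ ((Nat.log 2 (n + 1) : ℝ) + 1) * dist w₁ w₂ := by
  classical
  set S := (Icc 1 n).filter (fun k => xseq w₁ w₂ k ≠ xseq w₁ w₂ (k + 1)) with hS
  have hsum : ∑ k ∈ Icc 1 n, dist (xseq w₁ w₂ k) (xseq w₁ w₂ (k + 1))
      = ∑ k ∈ S, dist (xseq w₁ w₂ k) (xseq w₁ w₂ (k + 1)) := by
    rw [hS]
    refine (Finset.sum_filter_of_ne ?_).symm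
    intro k _ hne
    intro heq
    exact hne (by rw [heq, dist_self])
  have hsub : S ⊆ (Finset.range (Nat.log 2 (n + 1) + 1)).image (fun m => 2 ^ m - 1) := by
    intro k hk
    rw [hS, Finset.mem_filter, Finset.mem_Icc] at hk
    obtain ⟨⟨hk1, hk2⟩, hkne⟩ := hk
    have hpow := xseq_ne_pow w₁ w₂ hkne
    refine Finset.mem_image.2 ⟨Nat.log 2 (k + 1), ?_, by omega⟩
    rw [Finset.mem_range]
    have := Nat.log_mono_right (b := 2) (show k + 1 ≤ n + 1 by omega)
    omega
  have hcard : (S.card : ℝ) ≤ (Nat.log 2 (n + 1) : ℝ) + 1 := by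
    have := Finset.card_le_card hsub
    have h2 := Finset.card_image_le (s := Finset.range (Nat.log 2 (n + 1) + 1))
      (f := fun m => 2 ^ m - 1)
    rw [Finset.card_range] at h2
    exact_mod_cast le_trans this h2
  rw [hsum]
  calc ∑ k ∈ S, dist (xseq w₁ w₂ k) (xseq w₁ w₂ (k + 1))
      ≤ S.card • dist w₁ w₂ :=
        Finset.sum_le_card_nsmul _ _ _ (fun k _ => xseq_dist_le w₁ w₂ k (k + 1))
    _ = (S.card : ℝ) * dist w₁ w₂ := by rw [nsmul_eq_mul]
    _ ≤ ((Nat.log 2 (n + 1) : ℝ) + 1) * dist w₁ w₂ :=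
        mul_le_mul_of_nonneg_right hcard dist_nonneg

end AAS

theorem stmt_7 {X : Type*} [MetricSpace X] (f : X → X) (hf : ∀ a, f a = a)
    (w₁ w₂ : X) (hw : 0 < dist w₁ w₂) :
    ∃ x : ℕ → X,
      Filter.Tendsto
        (fun n : ℕ => (1 / (n : ℝ)) * ∑ k ∈ Finset.Icc 1 n, dist (f (x k)) (x (k + 1)))
        Filter.atTop (nhds 0) ∧
      ∀ z : X,
        0 <
          Filter.limsup
            (fun n : ℕ => (1 / (n : ℝ)) * ∑ i ∈ Finset.Icc 1 n, dist (f^[i] z) (x i))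
            Filter.atTop := by
  set D := dist w₁ w₂ with hD
  refine ⟨xseq w₁ w₂, ?_, ?_⟩
  · -- pseudo-orbit part
    simp only [hf]
    -- bound by g(n+1) where g t = 2*D*(2*log t + 1)/t
    have hlog : Filter.Tendsto (fun t : ℝ => Real.log t / t) atTop (nhds 0) :=
      Real.isLittleO_log_id_atTop.tendsto_div_nhds_zero
    have hinv : Filter.Tendsto (fun t : ℝ => t⁻¹) atTop (nhds 0) := tendsto_inv_atTop_zero
    have hg : Filter.Tendsto (fun t : ℝ => 2 * D * (2 * Real.log t + 1) / t) atTop (nhds 0) := by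
      have := ((hlog.const_mul (4 * D)).add (hinv.const_mul (2 * D)))
      rw [show (4 * D) * (0:ℝ) + (2 * D) * 0 = 0 by ring] at this
      refine this.congr (fun t => by field_simp; ring)
    have hcomp : Filter.Tendsto (fun n : ℕ => ((n : ℝ) + 1)) atTop atTop :=
      tendsto_atTop_add_const_right _ 1 tendsto_natCast_atTop_atTop
    refine squeeze_zero' (Filter.Eventually.of_forall fun n => by positivity) ?_ (hg.comp hcomp)
    filter_upwards [Filter.eventually_ge_atTop 1] with n hn
    have hn0 : (0:ℝ) < n := by exact_mod_cast hn
    have hb := xseq_sum_bound w₁ w₂ n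
    have hlogle : (Nat.log 2 (n + 1) : ℝ) ≤ 2 * Real.log (n + 1) := by
      have h1 : (Nat.log 2 (n + 1) : ℝ) ≤ Real.logb 2 (n + 1) := by
        have := Real.natLog_le_logb (n + 1) 2
        push_cast at this ⊢
        exact this
      have h2 : Real.logb 2 ((n : ℝ) + 1) ≤ 2 * Real.log ((n : ℝ) + 1) := by
        rw [Real.logb, div_le_iff₀ (by positivity : (0:ℝ) < Real.log 2)]
        have hl2 : (0.6931471803 : ℝ) < Real.log 2 := Real.log_two_gt_d9
        have hlx : 0 ≤ Real.log ((n : ℝ) + 1) := Real.log_nonneg (by push_cast; linarith)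
        nlinarith
      calc (Nat.log 2 (n + 1) : ℝ) ≤ Real.logb 2 (n + 1) := h1
        _ ≤ 2 * Real.log ((n:ℝ) + 1) := by push_cast at h2 ⊢; exact h2
    have hsum_nonneg : (0:ℝ) ≤ ∑ k ∈ Finset.Icc 1 n, dist (xseq w₁ w₂ k) (xseq w₁ w₂ (k + 1)) := by
      positivity
    have key : ∑ k ∈ Finset.Icc 1 n, dist (xseq w₁ w₂ k) (xseq w₁ w₂ (k + 1))
        ≤ (2 * Real.log ((n:ℝ) + 1) + 1) * D := by
      refine hb.trans (mul_le_mul_of_nonneg_right ?_ dist_nonneg)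
      push_cast at hlogle ⊢
      linarith
    show (1 / (n:ℝ)) * _ ≤ 2 * D * (2 * Real.log ((n:ℝ) + 1) + 1) / ((n:ℝ) + 1)
    have hlx : 0 ≤ Real.log ((n : ℝ) + 1) := Real.log_nonneg (by push_cast; linarith)
    have hn1 : (1:ℝ) ≤ (n:ℝ) := by exact_mod_cast hn
    have h1n : 1 / (n:ℝ) ≤ 2 / ((n:ℝ) + 1) := by
      rw [div_le_div_iff₀ hn0 (by linarith)]
      linarith
    calc (1 / (n:ℝ)) * ∑ k ∈ Finset.Icc 1 n, dist (xseq w₁ w₂ k) (xseq w₁ w₂ (k + 1))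
        ≤ (1 / (n:ℝ)) * ((2 * Real.log ((n:ℝ) + 1) + 1) * D) :=
          mul_le_mul_of_nonneg_left key (by positivity)
      _ ≤ (2 / ((n:ℝ) + 1)) * ((2 * Real.log ((n:ℝ) + 1) + 1) * D) := by
          refine mul_le_mul_of_nonneg_right h1n (by positivity)
      _ = 2 * D * (2 * Real.log ((n:ℝ) + 1) + 1) / ((n:ℝ) + 1) := by ring
  · -- shadowing fails
    intro z
    have hz : ∀ i, f^[i] z = z := fun i => Function.iterate_fixed (hf z) i
    simp only [hz]
    set s : ℕ → ℝ := fun n => (1 / (n:ℝ)) * ∑ i ∈ Finset.Icc 1 n, dist z (xseq w₁ w₂ i) with hs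
    -- choose the far point
    obtain ⟨p, hp2, w, hzw, hxw⟩ :
        ∃ p < 2, ∃ w : X, D / 2 ≤ dist z w ∧
          ∀ i, Nat.log 2 i % 2 = p → xseq w₁ w₂ i = w := by
      rcases le_or_gt (D / 2) (dist z w₁) with h | h
      · exact ⟨0, by norm_num, w₁, h, fun i hi => by unfold xseq; rw [if_pos hi]⟩
      · refine ⟨1, by norm_num, w₂, ?_, fun i hi => by unfold xseq; rw [if_neg (by omega)]⟩
        have := dist_triangle w₁ z w₂
        rw [dist_comm w₁ z] at this
        linarith
    have hfreq : ∃ᶠ n in atTop, D / 4 ≤ s n := by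
      rw [Filter.frequently_atTop]
      intro N
      set k := 2 * N + p with hk
      have hkp : k % 2 = p := by omega
      refine ⟨2 ^ (k + 1) - 1, ?_, ?_⟩
      · have := Nat.lt_two_pow_self (n := k + 1)
        omega
      · set n := 2 ^ (k + 1) - 1 with hn
        have hpk : (0:ℕ) < 2 ^ k := Nat.pow_pos (by norm_num)
        have hpk1 : (0:ℕ) < 2 ^ (k + 1) := Nat.pow_pos (by norm_num)
        have hnk : n + 1 = 2 ^ (k + 1) := by omega
        have h2k : 2 ^ (k+1) = 2 * 2 ^ k := by ring
        have hsub : Finset.Icc (2 ^ k) n ⊆ Finset.Icc 1 n := by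
          intro i hi
          rw [Finset.mem_Icc] at hi ⊢
          omega
        have hval : ∀ i ∈ Finset.Icc (2 ^ k) n, dist z (xseq w₁ w₂ i) = dist z w := by
          intro i hi
          rw [Finset.mem_Icc] at hi
          have hlog : Nat.log 2 i = k :=
            Nat.log_eq_of_pow_le_of_lt_pow hi.1 (by omega)
          rw [hxw i (by rw [hlog]; exact hkp)]
        have hsum1 : ∑ i ∈ Finset.Icc (2 ^ k) n, dist z (xseq w₁ w₂ i)
            = (2 ^ k : ℝ) * dist z w := by
          rw [Finset.sum_congr rfl hval, Finset.sum_const, Nat.card_Icc]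
          have h' : n + 1 - 2 ^ k = 2 ^ k := by omega
          rw [h', nsmul_eq_mul]
          push_cast
          ring
        have hsum2 : (2 ^ k : ℝ) * dist z w
            ≤ ∑ i ∈ Finset.Icc 1 n, dist z (xseq w₁ w₂ i) := by
          rw [← hsum1]
          exact Finset.sum_le_sum_of_subset_of_nonneg hsub (fun i _ _ => dist_nonneg)
        have hn0 : (0:ℝ) < n := by
          have : 1 ≤ n := by omega
          exact_mod_cast this
        show D / 4 ≤ 1 / (n:ℝ) * ∑ i ∈ Finset.Icc 1 n, dist z (xseq w₁ w₂ i)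
        rw [one_div, inv_mul_eq_div, le_div_iff₀ hn0]
        have hnle : (n : ℝ) ≤ 2 * 2 ^ k := by
          have : n ≤ 2 * 2 ^ k := by omega
          exact_mod_cast this
        have hDnn : (0:ℝ) ≤ D := dist_nonneg
        calc D / 4 * (n:ℝ) ≤ D / 4 * (2 * 2 ^ k) := by
              refine mul_le_mul_of_nonneg_left hnle (by positivity)
          _ = (2 ^ k : ℝ) * (D / 2) := by ring
          _ ≤ (2 ^ k : ℝ) * dist z w := by
              refine mul_le_mul_of_nonneg_left hzw (by positivity)
          _ ≤ ∑ i ∈ Finset.Icc 1 n, dist z (xseq w₁ w₂ i) := hsum2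
    have hbdd : Filter.IsBoundedUnder (· ≤ ·) atTop s := by
      refine isBoundedUnder_of ⟨dist z w₁ + dist z w₂, fun n => ?_⟩
      have hterm : ∀ i ∈ Finset.Icc 1 n, dist z (xseq w₁ w₂ i) ≤ dist z w₁ + dist z w₂ := by
        intro i _
        rcases xseq_mem w₁ w₂ i with h | h <;> rw [h]
        · linarith [dist_nonneg (x := z) (y := w₂)]
        · linarith [dist_nonneg (x := z) (y := w₁)]
      have hsc := Finset.sum_le_card_nsmul _ _ _ hterm
      rw [Nat.card_Icc, Nat.add_sub_cancel, nsmul_eq_mul] at hsc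
      rcases Nat.eq_zero_or_pos n with h0 | h0
      · subst h0
        simp only [hs, Nat.cast_zero, div_zero]
        have : Finset.Icc 1 0 = (∅ : Finset ℕ) := by decide
        rw [this, Finset.sum_empty, mul_zero]
        positivity
      · have hn0 : (0:ℝ) < n := by exact_mod_cast h0
        show (1 / (n:ℝ)) * ∑ i ∈ Finset.Icc 1 n, dist z (xseq w₁ w₂ i)
            ≤ dist z w₁ + dist z w₂
        calc (1 / (n:ℝ)) * ∑ i ∈ Finset.Icc 1 n, dist z (xseq w₁ w₂ i)
            ≤ (1 / (n:ℝ)) * ((n:ℝ) * (dist z w₁ + dist z w₂)) :=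
              mul_le_mul_of_nonneg_left hsc (by positivity)
          _ = dist z w₁ + dist z w₂ := by field_simp
    have hle := le_limsup_of_frequently_le hfreq hbdd
    calc (0:ℝ) < D / 4 := by linarith
      _ ≤ _ := hle
end

section
/- Let f be a homeomorphism of a compact metric space X and n ≥ 1. If f^n has the limit shadowing property, then f has the limit shadowing property. -/
open Filter


/-- ℤ-iteration of a homeomorphism. -/
def zIter {X : Type*} [TopologicalSpace X] (f : X ≃ₜ X) (i : ℤ) (z : X) : X :=
  if 0 ≤ i then (⇑f)^[i.toNat] z else (⇑f.symm)^[(-i).toNat] z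

/-- The limit shadowing property for a homeomorphism of a metric space. -/
def LimitShadowing {X : Type*} [MetricSpace X] (f : X ≃ₜ X) : Prop :=
  ∀ x : ℤ → X,
    (∀ ε : ℝ, 0 < ε → ∃ N : ℕ, ∀ i : ℤ, N ≤ i.natAbs → dist (f (x i)) (x (i + 1)) < ε) →
    ∃ z : X,
      Filter.Tendsto (fun i : ℤ => dist (zIter f i z) (x i)) Filter.atTop (nhds 0) ∧
      Filter.Tendsto (fun i : ℤ => dist (zIter f i z) (x i)) Filter.atBot (nhds 0)

/-- The n-th power of a homeomorphism as a homeomorphism. -/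
def homeoPow {X : Type*} [TopologicalSpace X] (f : X ≃ₜ X) : ℕ → (X ≃ₜ X)
  | 0 => Homeomorph.refl X
  | n + 1 => (homeoPow f n).trans f

lemma homeoPow_coe {X : Type*} [TopologicalSpace X] (f : X ≃ₜ X) (n : ℕ) :
    ⇑(homeoPow f n) = (⇑f)^[n] := by
  induction n with
  | zero => rfl
  | succ k ih =>
    rw [Function.iterate_succ']
    show ⇑((homeoPow f k).trans f) = _
    funext z
    simp [Homeomorph.trans, ih]
    exact congrArg f (congrFun ih z)

lemma homeoPow_toEquiv {X : Type*} [TopologicalSpace X] (f : X ≃ₜ X) (n : ℕ) :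
    (homeoPow f n).toEquiv = (f.toEquiv ^ n : Equiv.Perm X) := by
  induction n with
  | zero => rfl
  | succ k ih =>
    show ((homeoPow f k).toEquiv.trans f.toEquiv) = _
    rw [← Equiv.Perm.mul_def, ih, ← pow_succ']

lemma zIter_eq_pow {X : Type*} [TopologicalSpace X] (f : X ≃ₜ X) (i : ℤ) (z : X) :
    zIter f i z = ((f.toEquiv ^ i : Equiv.Perm X)) z := by
  rcases le_or_gt 0 i with hi | hi
  · rw [zIter, if_pos hi]
    conv_rhs => rw [← Int.toNat_of_nonneg hi]
    rw [zpow_natCast, ← Equiv.Perm.iterate_eq_pow]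
    rfl
  · rw [zIter, if_neg (not_le.mpr hi)]
    have h1 : (f.toEquiv ^ i) = ((f.toEquiv⁻¹ : Equiv.Perm X) ^ (-i).toNat) := by
      rw [inv_pow, ← zpow_natCast, Int.toNat_of_nonneg (by omega), ← zpow_neg, neg_neg]
    rw [h1, ← Equiv.Perm.iterate_eq_pow]
    rfl

lemma zIter_add {X : Type*} [TopologicalSpace X] (f : X ≃ₜ X) (a b : ℤ) (z : X) :
    zIter f (a + b) z = zIter f a (zIter f b z) := by
  simp [zIter_eq_pow, zpow_add, Equiv.Perm.mul_apply]

lemma zIter_nonneg {X : Type*} [TopologicalSpace X] (f : X ≃ₜ X) (r : ℤ) (hr : 0 ≤ r) (z : X) :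
    zIter f r z = (⇑f)^[r.toNat] z := by
  rw [zIter, if_pos hr]

lemma zIter_homeoPow {X : Type*} [TopologicalSpace X] (f : X ≃ₜ X) (n : ℕ) (q : ℤ) (z : X) :
    zIter (homeoPow f n) q z = zIter f ((n : ℤ) * q) z := by
  rw [zIter_eq_pow, zIter_eq_pow, homeoPow_toEquiv, ← zpow_natCast, ← zpow_mul]

lemma iter_uc {X : Type*} [MetricSpace X] [CompactSpace X] (f : X ≃ₜ X) (n : ℕ) :
    ∀ ε : ℝ, 0 < ε → ∃ δ > 0, ∀ k ≤ n, ∀ a b : X, dist a b < δ →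
      dist ((⇑f)^[k] a) ((⇑f)^[k] b) < ε := by
  induction n with
  | zero =>
    intro ε hε
    exact ⟨ε, hε, fun k hk a b hab => by
      interval_cases k; simpa using hab⟩
  | succ m ih =>
    intro ε hε
    obtain ⟨δ₁, hδ₁, h₁⟩ := ih ε hε
    have huc : UniformContinuous (⇑f)^[m+1] :=
      CompactSpace.uniformContinuous_of_continuous (f.continuous.iterate (m+1))
    obtain ⟨δ₂, hδ₂, h₂⟩ := Metric.uniformContinuous_iff.mp huc ε hε
    refine ⟨min δ₁ δ₂, lt_min hδ₁ hδ₂, fun k hk a b hab => ?_⟩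
    rcases Nat.lt_or_ge k (m+1) with hk' | hk'
    · exact h₁ k (by omega) a b (lt_of_lt_of_le hab (min_le_left _ _))
    · have : k = m + 1 := by omega
      subst this
      exact h₂ (lt_of_lt_of_le hab (min_le_right _ _))

lemma chain_est {X : Type*} [MetricSpace X] [CompactSpace X] (f : X ≃ₜ X)
    (x : ℤ → X)
    (hx : ∀ ε : ℝ, 0 < ε → ∃ N : ℕ, ∀ i : ℤ, N ≤ i.natAbs → dist (f (x i)) (x (i + 1)) < ε)
    (n : ℕ) :
    ∀ ε : ℝ, 0 < ε → ∃ N : ℕ, ∀ r ≤ n, ∀ i : ℤ, N ≤ i.natAbs →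
      dist ((⇑f)^[r] (x i)) (x (i + r)) < ε := by
  induction n with
  | zero =>
    intro ε hε
    refine ⟨0, fun r hr i _ => ?_⟩
    interval_cases r
    simpa using hε
  | succ m ih =>
    intro ε hε
    have huc : UniformContinuous (⇑f) :=
      CompactSpace.uniformContinuous_of_continuous f.continuous
    obtain ⟨δ, hδ0, hδ⟩ := Metric.uniformContinuous_iff.mp huc (ε/2) (by linarith)
    obtain ⟨N₁, hN₁⟩ := ih (min ε δ) (lt_min hε hδ0)
    obtain ⟨N₂, hN₂⟩ := hx (ε/2) (by linarith)
    refine ⟨max N₁ (N₂ + (m+1)), fun r hr i hi => ?_⟩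
    rcases Nat.lt_or_ge r (m+1) with hr' | hr'
    · exact lt_of_lt_of_le (hN₁ r (by omega) i (by omega)) (min_le_left _ _)
    · have hre : r = m + 1 := by omega
      subst hre
      have hchain : dist ((⇑f)^[m] (x i)) (x (i + m)) < δ :=
        lt_of_lt_of_le (hN₁ m (by omega) i (by omega)) (min_le_right _ _)
      have habs : N₂ ≤ (i + (m : ℤ)).natAbs := by
        have := Int.natAbs_sub_le (i + (m : ℤ)) (m : ℤ)
        simp only [add_sub_cancel_right] at this
        have hm : ((m : ℤ)).natAbs = m := Int.natAbs_natCast m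
        omega
      have h2 : dist (f (x (i + m))) (x (i + m + 1)) < ε/2 := hN₂ (i + m) habs
      have h1 : dist (f ((⇑f)^[m] (x i))) (f (x (i + m))) < ε/2 := hδ hchain
      have e1 : (⇑f)^[m+1] (x i) = f ((⇑f)^[m] (x i)) := Function.iterate_succ_apply' _ _ _
      have e2 : i + ((m : ℤ) + 1) = i + m + 1 := by ring
      calc dist ((⇑f)^[m+1] (x i)) (x (i + ((m:ℕ)+1 : ℕ)))
          = dist (f ((⇑f)^[m] (x i))) (x (i + m + 1)) := by
            rw [e1]; congr 1; push_cast; rw [e2]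
        _ ≤ dist (f ((⇑f)^[m] (x i))) (f (x (i + m))) + dist (f (x (i + m))) (x (i + m + 1)) :=
            dist_triangle _ _ _
        _ < ε/2 + ε/2 := add_lt_add h1 h2
        _ = ε := by ring

theorem stmt_9 {X : Type*} [MetricSpace X] [CompactSpace X] (f : X ≃ₜ X) (n : ℕ)
    (hn : 1 ≤ n) (h : LimitShadowing (homeoPow f n)) : LimitShadowing f := by
  intro x hx
  set m : ℤ := (n : ℤ) with hm
  have hm0 : 0 < m := by rw [hm]; exact_mod_cast hn
  -- the subsequence is a limit pseudo-orbit of f^n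
  have pseudo : ∀ ε : ℝ, 0 < ε → ∃ N : ℕ, ∀ q : ℤ, N ≤ q.natAbs →
      dist ((homeoPow f n) (x (m * q))) (x (m * (q + 1))) < ε := by
    intro ε hε
    obtain ⟨N, hN⟩ := chain_est f x hx n ε hε
    refine ⟨N, fun q hq => ?_⟩
    have h1 : N ≤ (m * q).natAbs := by
      rw [hm, Int.natAbs_mul]
      exact le_trans hq (Nat.le_mul_of_pos_left _ (by simpa using Nat.lt_of_lt_of_le Nat.zero_lt_one hn))
    have := hN n le_rfl (m * q) h1
    have e : m * (q + 1) = m * q + (n : ℤ) := by rw [hm]; ring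
    rw [e]
    simpa [homeoPow_coe] using this
  obtain ⟨z, htop, hbot⟩ := h (fun q => x (m * q)) pseudo
  have htop' : ∀ δ : ℝ, 0 < δ → ∃ Q : ℤ, ∀ q ≥ Q,
      dist (zIter f (m * q) z) (x (m * q)) < δ := by
    intro δ hδ
    obtain ⟨Q, hQ⟩ := eventually_atTop.mp ((Metric.tendsto_nhds.mp htop) δ hδ)
    refine ⟨Q, fun q hq => ?_⟩
    have := hQ q hq
    rw [Real.dist_eq, sub_zero, abs_of_nonneg dist_nonneg] at this
    simpa [zIter_homeoPow, hm] using this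
  have hbot' : ∀ δ : ℝ, 0 < δ → ∃ Q : ℤ, ∀ q ≤ Q,
      dist (zIter f (m * q) z) (x (m * q)) < δ := by
    intro δ hδ
    obtain ⟨Q, hQ⟩ := eventually_atBot.mp ((Metric.tendsto_nhds.mp hbot) δ hδ)
    refine ⟨Q, fun q hq => ?_⟩
    have := hQ q hq
    rw [Real.dist_eq, sub_zero, abs_of_nonneg dist_nonneg] at this
    simpa [zIter_homeoPow, hm] using this
  have main : ∀ ε : ℝ, 0 < ε → ∃ I J : ℤ,
      (∀ i ≥ I, dist (zIter f i z) (x i) < ε) ∧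
      (∀ i ≤ J, dist (zIter f i z) (x i) < ε) := by
    intro ε hε
    obtain ⟨δ, hδ0, hδ⟩ := iter_uc f n (ε/2) (by linarith)
    obtain ⟨N, hN⟩ := chain_est f x hx n (ε/2) (by linarith)
    have key : ∀ q : ℤ, N ≤ (m * q).natAbs →
        dist (zIter f (m * q) z) (x (m * q)) < δ →
        ∀ i : ℤ, i = m * q + i % m → dist (zIter f i z) (x i) < ε := by
      intro q hNq hd i hi
      set r : ℤ := i % m with hr
      have hr0 : 0 ≤ r := Int.emod_nonneg i (ne_of_gt hm0)
      have hrm : r < m := Int.emod_lt_of_pos i hm0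
      have hrn : r.toNat ≤ n := by omega
      have e1 : zIter f i z = (⇑f)^[r.toNat] (zIter f (m * q) z) := by
        rw [hi, add_comm, zIter_add, zIter_nonneg f r hr0]
      have e2 : x i = x (m * q + (r.toNat : ℤ)) := by
        rw [hi, Int.toNat_of_nonneg hr0]
      calc dist (zIter f i z) (x i)
          ≤ dist ((⇑f)^[r.toNat] (zIter f (m * q) z)) ((⇑f)^[r.toNat] (x (m * q)))
            + dist ((⇑f)^[r.toNat] (x (m * q))) (x (m * q + (r.toNat : ℤ))) := by
            rw [e1, e2]; exact dist_triangle _ _ _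
        _ < ε/2 + ε/2 :=
            add_lt_add (hδ r.toNat hrn _ _ hd) (hN r.toNat hrn (m * q) hNq)
        _ = ε := by ring
    obtain ⟨Q₁, hQ₁⟩ := htop' δ hδ0
    obtain ⟨Q₂, hQ₂⟩ := hbot' δ hδ0
    refine ⟨max (m * Q₁) (m * (N : ℤ)), min (m * Q₂) (m * (-(N : ℤ))), ?_, ?_⟩
    · intro i hi
      set q : ℤ := i / m with hq
      have hq1 : Q₁ ≤ q := by
        have h1 : m * Q₁ ≤ i := le_trans (le_max_left _ _) hi
        have := Int.ediv_le_ediv hm0 h1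
        rwa [Int.mul_ediv_cancel_left _ (ne_of_gt hm0)] at this
      have hq2 : (N : ℤ) ≤ q := by
        have h1 : m * (N : ℤ) ≤ i := le_trans (le_max_right _ _) hi
        have := Int.ediv_le_ediv hm0 h1
        rwa [Int.mul_ediv_cancel_left _ (ne_of_gt hm0)] at this
      have hNq : N ≤ (m * q).natAbs := by
        rw [Int.natAbs_mul]
        have h1 : N ≤ q.natAbs := by omega
        exact le_trans h1 (Nat.le_mul_of_pos_left _ (by rw [hm]; simpa using Nat.lt_of_lt_of_le Nat.zero_lt_one hn))
      exact key q hNq (hQ₁ q hq1) i (Int.mul_ediv_add_emod i m).symm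
    · intro i hi
      set q : ℤ := i / m with hq
      have hq1 : q ≤ Q₂ := by
        have h1 : i ≤ m * Q₂ := le_trans hi (min_le_left _ _)
        have := Int.ediv_le_ediv hm0 h1
        rwa [Int.mul_ediv_cancel_left _ (ne_of_gt hm0)] at this
      have hq2 : q ≤ -(N : ℤ) := by
        have h1 : i ≤ m * (-(N : ℤ)) := le_trans hi (min_le_right _ _)
        have := Int.ediv_le_ediv hm0 h1
        rwa [Int.mul_ediv_cancel_left _ (ne_of_gt hm0)] at this
      have hNq : N ≤ (m * q).natAbs := by
        rw [Int.natAbs_mul]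
        have h1 : N ≤ q.natAbs := by omega
        exact le_trans h1 (Nat.le_mul_of_pos_left _ (by rw [hm]; simpa using Nat.lt_of_lt_of_le Nat.zero_lt_one hn))
      exact key q hNq (hQ₂ q hq1) i (Int.mul_ediv_add_emod i m).symm
  refine ⟨z, ?_, ?_⟩
  · refine Metric.tendsto_nhds.mpr fun ε hε => ?_
    obtain ⟨I, _, hI, _⟩ := main ε hε
    exact eventually_atTop.mpr ⟨I, fun i hi => by
      rw [Real.dist_eq, sub_zero, abs_of_nonneg dist_nonneg]; exact hI i hi⟩
  · refine Metric.tendsto_nhds.mpr fun ε hε => ?_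
    obtain ⟨_, J, _, hJ⟩ := main ε hε
    exact eventually_atBot.mpr ⟨J, fun i hi => by
      rw [Real.dist_eq, sub_zero, abs_of_nonneg dist_nonneg]; exact hJ i hi⟩
end

section
/- Let f be a continuous surjective map of a compact metric space X with the average shadowing property. Then f is chain transitive: for any x, y ∈ X and any δ > 0 there exist points x = z₀, z₁, …, z_K = y with d(f(z_j), z_{j+1}) < δ for all 0 ≤ j < K. -/
/-- The average shadowing property for a map of a metric space. -/
def AvgShadowing {X : Type*} [MetricSpace X] (f : X → X) : Prop :=
  ∀ ε : ℝ, 0 < ε → ∃ δ : ℝ, 0 < δ ∧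
    ∀ x : ℤ → X,
      (∃ N : ℕ, 1 ≤ N ∧ ∀ n : ℕ, N ≤ n → ∀ i : ℤ,
        (1 / (n : ℝ)) * ∑ k ∈ Finset.Icc 1 n, dist (f (x (i + k))) (x (i + k + 1)) < δ) →
      ∃ z : X,
        Filter.limsup
          (fun n : ℕ => (1 / (n : ℝ)) * ∑ i ∈ Finset.Icc 1 n, dist (f^[i] z) (x (i : ℤ)))
          Filter.atTop < ε

/-- Chain transitivity for a map of a metric space. -/
def ChainTransitive {X : Type*} [MetricSpace X] (f : X → X) : Prop :=
  ∀ x y : X, ∀ δ : ℝ, 0 < δ → ∃ K : ℕ, ∃ c : ℕ → X,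
    c 0 = x ∧ c K = y ∧ ∀ j < K, dist (f (c j)) (c (j + 1)) < δ

open Filter Finset

private lemma sub_lt_of_div_eq {L A B : ℕ} (hL : 0 < L) (hAB : A ≤ B) (h : A / L = B / L) :
    B - A < L := by
  have h1 := Nat.div_add_mod A L
  have h2 := Nat.div_add_mod B L
  have hm1 : A % L < L := Nat.mod_lt _ hL
  have hm2 : B % L < L := Nat.mod_lt _ hL
  rw [h] at h1
  generalize A % L = p at h1 hm1
  generalize B % L = q at h2 hm2
  generalize L * (B / L) = c at h1 h2
  omega

private lemma card_filter_dvd_le (L n : ℕ) (hL : 0 < L) (i : ℤ) :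
    ((Finset.Icc 1 n).filter (fun k : ℕ => (L:ℤ) ∣ (i + k))).card ≤ n / L + 1 := by
  classical
  rw [show n / L + 1 = (Finset.range (n / L + 1)).card from (Finset.card_range _).symm]
  apply Finset.card_le_card_of_injOn (fun k => (k - 1) / L)
  · intro k hk
    simp only [Finset.mem_coe, Finset.mem_filter, Finset.mem_Icc] at hk
    simp only [Finset.mem_coe, Finset.mem_range]
    have : (k-1)/L ≤ n / L := Nat.div_le_div_right (by omega)
    omega
  · intro k1 h1 k2 h2 heq
    simp only [Finset.coe_filter, Set.mem_setOf_eq, Finset.mem_Icc] at h1 h2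
    have key : ∀ a b : ℕ, 1 ≤ a → a ≤ b → (L:ℤ) ∣ i + a → (L:ℤ) ∣ i + b →
        (a-1)/L = (b-1)/L → a = b := by
      intro a b ha hab hda hdb hq
      have hd : (L:ℤ) ∣ ((b : ℤ) - a) := by
        have h3 := dvd_sub hdb hda
        have h4 : (i + (b:ℤ)) - (i + a) = (b:ℤ) - a := by ring
        rwa [h4] at h3
      have hd' : L ∣ (b - a) := by
        have h5 : ((b - a : ℕ) : ℤ) = (b:ℤ) - a := by omega
        rwa [← h5, Int.natCast_dvd_natCast] at hd
      have hlt : (b-1) - (a-1) < L := sub_lt_of_div_eq hL (by omega) hq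
      have : b - a = 0 := Nat.eq_zero_of_dvd_of_lt hd' (by omega)
      omega
    rcases le_total k1 k2 with hle | hle
    · exact key _ _ h1.1.1 hle h1.2 h2.2 heq
    · exact (key _ _ h2.1.1 hle h2.2 h1.2 heq.symm).symm

private lemma exists_good (d : ℕ → ℝ) (hd : ∀ i, 0 ≤ d i)
    (P W : ℕ) (hW : 0 < W) (hWP : W ≤ P)
    (η ε : ℝ) (hη : 0 < η) (hεpos : 0 < ε)
    (hne : ε * P < η * W)
    (hlim : ∀ᶠ n : ℕ in atTop, (1/(n:ℝ)) * ∑ i ∈ Finset.Icc 1 n, d i < ε)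
    (T : ℕ → Prop)
    (hT : ∀ a : ℕ, ∃ B : ℕ, a < B ∧ ∀ q s : ℕ, s < W → T (B + P * q + s)) :
    ∀ M : ℕ, ∃ i : ℕ, M < i ∧ T i ∧ d i < η := by
  by_contra hcon
  push_neg at hcon
  obtain ⟨M, hM⟩ := hcon
  obtain ⟨B, hB, hBT⟩ := hT M
  obtain ⟨N₀, hN₀⟩ := eventually_atTop.mp hlim
  have hpos : 0 < η * W - ε * P := by linarith
  obtain ⟨m₀, hm₀⟩ := exists_nat_gt ((ε * B) / (η * W - ε * P))
  set m := max (max N₀ 1) m₀ with hm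
  have hmN : N₀ ≤ m := le_trans (le_max_left _ _) (le_max_left _ _)
  have hm1 : 1 ≤ m := le_trans (le_max_right _ _) (le_max_left _ _)
  have hmm : (m₀ : ℝ) ≤ m := Nat.cast_le.mpr (le_max_right (max N₀ 1) m₀)
  have hmB : ε * B < (m : ℝ) * (η * W - ε * P) := by
    have h6 := (div_lt_iff₀ hpos).mp (lt_of_lt_of_le hm₀ hmm)
    linarith
  set n := B + P * m with hn
  have hnm : m ≤ n := by
    have : 1 * m ≤ P * m := Nat.mul_le_mul_right _ (by omega)
    omega
  have havg := hN₀ n (le_trans hmN hnm)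
  have hn1 : 1 ≤ n := le_trans hm1 hnm
  set φ : ℕ → ℕ := fun t => B + P * (t / W) + t % W with hφ
  have haux : ∀ a b r1 r2 : ℕ, r1 < W → a < b → B + P * a + r1 ≠ B + P * b + r2 := by
    intro a b r1 r2 hr1 hab heq2
    have h3 : P * a + P ≤ P * b := by
      have h4 := Nat.mul_le_mul_left P (show a + 1 ≤ b by omega)
      simpa [Nat.mul_add, Nat.mul_one] using h4
    generalize P * a = u at heq2 h3
    generalize P * b = v at heq2 h3
    omega
  set S := (Finset.range (W * m)).image φ with hS
  have hφT : ∀ t, T (φ t) := fun t => hBT (t / W) (t % W) (Nat.mod_lt _ hW)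
  have hφM : ∀ t, M < φ t := fun t => by
    have : B ≤ φ t := by simp only [hφ]; omega
    omega
  have hsub : S ⊆ Finset.Icc 1 n := by
    intro v hv
    simp only [hS, Finset.mem_image, Finset.mem_range] at hv
    obtain ⟨t, ht, rfl⟩ := hv
    have h1 : t / W < m := (Nat.div_lt_iff_lt_mul hW).mpr (by rwa [Nat.mul_comm] at ht)
    have h2 : t % W < W := Nat.mod_lt _ hW
    simp only [Finset.mem_Icc]
    constructor
    · simp only [hφ]; omega
    · have h7 : P * (t / W) + P ≤ P * m := by
        have h8 := Nat.mul_le_mul_left P (show t / W + 1 ≤ m by omega)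
        simpa [Nat.mul_add, Nat.mul_one] using h8
      simp only [hφ]
      omega
  have hinj : Set.InjOn φ (Finset.range (W * m)) := by
    intro t1 _ t2 _ heq
    simp only [hφ] at heq
    have e1 : t1 % W < W := Nat.mod_lt _ hW
    have e2 : t2 % W < W := Nat.mod_lt _ hW
    have hq : t1 / W = t2 / W := by
      by_contra hne'
      rcases Nat.lt_or_ge (t1 / W) (t2 / W) with hlt | hge
      · exact haux _ _ _ _ e1 hlt heq
      · exact haux _ _ _ _ e2 (by omega) heq.symm
    have hr : t1 % W = t2 % W := by
      rw [hq] at heq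
      generalize P * (t2 / W) = u at heq
      omega
    have d1 := Nat.div_add_mod t1 W
    have d2 := Nat.div_add_mod t2 W
    rw [hq, hr] at d1
    exact d1.symm.trans d2
  have hcard : S.card = W * m := by
    rw [hS, Finset.card_image_of_injOn hinj, Finset.card_range]
  have hsum1 : η * ((W : ℝ) * m) ≤ ∑ i ∈ S, d i := by
    have hall : ∀ i ∈ S, η ≤ d i := by
      intro i hi
      simp only [hS, Finset.mem_image, Finset.mem_range] at hi
      obtain ⟨t, _, rfl⟩ := hi
      exact hM _ (hφM t) (hφT t)
    have h9 := Finset.card_nsmul_le_sum S d η hall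
    rw [hcard] at h9
    calc η * ((W : ℝ) * m) = (W * m) • η := by rw [nsmul_eq_mul]; push_cast; ring
      _ ≤ ∑ i ∈ S, d i := h9
  have hsum2 : ∑ i ∈ S, d i ≤ ∑ i ∈ Finset.Icc 1 n, d i :=
    Finset.sum_le_sum_of_subset_of_nonneg hsub (fun i _ _ => hd i)
  have hnpos : (0:ℝ) < n := by exact_mod_cast Nat.pos_of_ne_zero (by omega)
  have hfin : ∑ i ∈ Finset.Icc 1 n, d i < ε * n := by
    rw [one_div] at havg
    have := (inv_mul_lt_iff₀ hnpos).mp havg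
    linarith
  have hcast : (n : ℝ) = B + P * m := by rw [hn]; push_cast; ring
  rw [hcast] at hfin
  nlinarith [hsum1, hsum2, hfin, hmB]

private noncomputable def pseudo {X : Type*} (f g : X → X) (x y : X) (L : ℕ) : ℤ → X :=
  fun i =>
    if i ≤ 0 then g^[(-i).toNat] x
    else if ((i - 1).toNat % (2 * L)) < L then f^[(i - 1).toNat % (2 * L)] x
    else g^[2 * L - 1 - (i - 1).toNat % (2 * L)] y

private lemma pseudo_nat {X : Type*} (f g : X → X) (x y : X) (L : ℕ) (i : ℕ) (hi : 1 ≤ i) :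
    pseudo f g x y L (i : ℤ) =
      if (i - 1) % (2 * L) < L then f^[(i - 1) % (2 * L)] x
      else g^[2 * L - 1 - (i - 1) % (2 * L)] y := by
  have h0 : ¬ ((i : ℤ) ≤ 0) := by omega
  have h1 : ((i : ℤ) - 1).toNat = i - 1 := by omega
  simp only [pseudo, if_neg h0, h1]

private lemma pseudo_step {X : Type*} (f g : X → X) (hg : ∀ w, f (g w) = w)
    (x y : X) (L : ℕ) (hL : 2 ≤ L) (j : ℤ) (hj : ¬ ((L : ℤ) ∣ j)) :
    f (pseudo f g x y L j) = pseudo f g x y L (j + 1) := by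
  rcases lt_trichotomy j 0 with hneg | rfl | hpos
  · have e1 : j ≤ 0 := le_of_lt hneg
    have e2 : j + 1 ≤ 0 := by omega
    have e3 : (-j).toNat = (-(j + 1)).toNat + 1 := by omega
    simp only [pseudo, if_pos e1, if_pos e2, e3]
    rw [Function.iterate_succ_apply']
    exact hg _
  · exact absurd (dvd_zero _) hj
  · set m := (j - 1).toNat with hm
    have hjm : (j : ℤ) = ((m + 1 : ℕ) : ℤ) := by omega
    have hdvd : ¬ (L ∣ (m + 1)) := by
      intro hc
      exact hj (by rw [hjm]; exact_mod_cast hc)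
    set r := m % (2 * L) with hr
    have hr2 : r < 2 * L := Nat.mod_lt _ (by omega)
    have hrL : r % L = m % L := Nat.mod_mod_of_dvd m ⟨2, by ring⟩
    have hmL : (m + 1) % L ≠ 0 := fun hc => hdvd (Nat.dvd_of_mod_eq_zero hc)
    have hrne1 : r ≠ L - 1 := by
      intro hc
      apply hmL
      have h5 : m % L = L - 1 := by rw [← hrL, hc]; exact Nat.mod_eq_of_lt (by omega)
      rw [Nat.add_mod, h5, Nat.mod_eq_of_lt (show 1 < L by omega)]
      simp [Nat.sub_add_cancel (show 1 ≤ L by omega)]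
    have hrne2 : r ≠ 2 * L - 1 := by
      intro hc
      apply hmL
      have h5 : m % L = L - 1 := by
        rw [← hrL, hc]
        have : 2 * L - 1 = L + (L - 1) := by omega
        rw [this, Nat.add_mod_left]
        exact Nat.mod_eq_of_lt (by omega)
      rw [Nat.add_mod, h5, Nat.mod_eq_of_lt (show 1 < L by omega)]
      simp [Nat.sub_add_cancel (show 1 ≤ L by omega)]
    have hsucc : (m + 1) % (2 * L) = r + 1 := by
      rw [Nat.add_mod, ← hr, Nat.mod_eq_of_lt (show 1 < 2 * L by omega),
        Nat.mod_eq_of_lt (show r + 1 < 2 * L by omega)]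
    have hj1 : (j + 1 : ℤ) = ((m + 2 : ℕ) : ℤ) := by omega
    rw [hjm, show ((m+1:ℕ):ℤ)+1 = ((m+2:ℕ):ℤ) by push_cast; ring, pseudo_nat f g x y L (m + 1) (by omega),
      pseudo_nat f g x y L (m + 2) (by omega)]
    simp only [Nat.add_sub_cancel, show m + 2 - 1 = m + 1 by omega, hsucc, ← hr]
    rcases Nat.lt_or_ge r L with hcase | hcase
    · rw [if_pos hcase, if_pos (show r + 1 < L by omega),
        Function.iterate_succ_apply']
    · rw [if_neg (by omega), if_neg (by omega)]
      have h6 : 2 * L - 1 - r = (2 * L - 1 - (r + 1)) + 1 := by omega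
      rw [h6, Function.iterate_succ_apply']
      exact hg _

theorem stmt_10 {X : Type*} [MetricSpace X] [CompactSpace X] (f : X → X)
    (hcont : Continuous f) (hsurj : Function.Surjective f)
    (h : AvgShadowing f) : ChainTransitive f := by
  intro x y δ hδ
  classical
  obtain ⟨D0, hD0⟩ := Metric.isBounded_iff.mp (isCompact_univ (X := X)).isBounded
  set D := max D0 1 with hD
  have hD1 : (1:ℝ) ≤ D := le_max_right _ _
  have hDpos : (0:ℝ) < D := lt_of_lt_of_le one_pos hD1
  have hDb : ∀ a b : X, dist a b ≤ D := fun a b =>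
    le_trans (hD0 (Set.mem_univ a) (Set.mem_univ b)) (le_max_left _ _)
  obtain ⟨ε', hε', hUC⟩ := Metric.uniformContinuous_iff.mp
    (CompactSpace.uniformContinuous_of_continuous hcont) δ hδ
  set η := min δ ε' / 2 with hη
  have hmin : 0 < min δ ε' := lt_min hδ hε'
  have hηpos : 0 < η := by rw [hη]; linarith
  have hηδ : η < δ := by have := min_le_left δ ε'; rw [hη]; linarith
  have hηε' : η < ε' := by have := min_le_right δ ε'; rw [hη]; linarith
  set ε := η / 8 with hε
  have hεpos : 0 < ε := by rw [hε]; linarith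
  obtain ⟨δ₀, hδ₀, hASP⟩ := h ε hεpos
  obtain ⟨L₀, hL₀⟩ := exists_nat_gt (2 * D / δ₀)
  set L := L₀ + 2 with hLdef
  have hL2 : 2 ≤ L := by omega
  have hLcast : (0:ℝ) < (L:ℝ) := by exact_mod_cast (by omega : 0 < L)
  have hLgt : 2 * D / δ₀ < (L:ℝ) := by
    have : (L₀:ℝ) ≤ L := by exact_mod_cast (by omega : L₀ ≤ L)
    linarith
  have hLδ : 2 * D / (L:ℝ) < δ₀ := by
    rw [div_lt_iff₀ hLcast]
    have h6 := (div_lt_iff₀ hδ₀).mp hLgt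
    linarith
  set g := Function.surjInv hsurj with hgdef
  have hg : ∀ w, f (g w) = w := fun w => Function.rightInverse_surjInv hsurj w
  set xs := pseudo f g x y L with hxs
  have hpo : ∃ N : ℕ, 1 ≤ N ∧ ∀ n : ℕ, N ≤ n → ∀ i : ℤ,
      (1 / (n : ℝ)) * ∑ k ∈ Finset.Icc 1 n, dist (f (xs (i + k))) (xs (i + k + 1)) < δ₀ := by
    refine ⟨L, by omega, fun n hn i => ?_⟩
    have hbound : ∑ k ∈ Finset.Icc 1 n, dist (f (xs (i + k))) (xs (i + k + 1))
        ≤ D * (((n / L : ℕ) : ℝ) + 1) := by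
      have step1 : ∑ k ∈ Finset.Icc 1 n, dist (f (xs (i + k))) (xs (i + k + 1))
          ≤ ∑ k ∈ Finset.Icc 1 n, (if (L:ℤ) ∣ (i + (k:ℤ)) then D else 0) := by
        apply Finset.sum_le_sum
        intro k _
        by_cases hdv : (L:ℤ) ∣ (i + (k:ℤ))
        · rw [if_pos hdv]; exact hDb _ _
        · rw [if_neg hdv, hxs, pseudo_step f g hg x y L hL2 _ hdv, dist_self]
      have step2 : ∑ k ∈ Finset.Icc 1 n, (if (L:ℤ) ∣ (i + (k:ℤ)) then D else 0)
          = (((Finset.Icc 1 n).filter (fun k : ℕ => (L:ℤ) ∣ (i + (k:ℤ)))).card : ℝ) * D := by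
        rw [← Finset.sum_filter, Finset.sum_const, nsmul_eq_mul]
      have step3 := card_filter_dvd_le L n (by omega) i
      calc ∑ k ∈ Finset.Icc 1 n, dist (f (xs (i + k))) (xs (i + k + 1))
          ≤ ∑ k ∈ Finset.Icc 1 n, (if (L:ℤ) ∣ (i + (k:ℤ)) then D else 0) := step1
        _ = (((Finset.Icc 1 n).filter (fun k : ℕ => (L:ℤ) ∣ (i + (k:ℤ)))).card : ℝ) * D := step2
        _ ≤ (((n / L : ℕ) : ℝ) + 1) * D := by
            apply mul_le_mul_of_nonneg_right _ hDpos.le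
            exact_mod_cast step3
        _ = D * (((n / L : ℕ) : ℝ) + 1) := by ring
    have hnR : (L:ℝ) ≤ n := by exact_mod_cast hn
    have hnpos : (0:ℝ) < n := lt_of_lt_of_le hLcast hnR
    have h1 : ((n / L : ℕ) : ℝ) ≤ (n : ℝ) / L := Nat.cast_div_le
    calc (1 / (n : ℝ)) * ∑ k ∈ Finset.Icc 1 n, dist (f (xs (i + k))) (xs (i + k + 1))
        ≤ (1 / (n:ℝ)) * (D * (((n / L : ℕ) : ℝ) + 1)) :=
          mul_le_mul_of_nonneg_left hbound (by positivity)
      _ ≤ (1 / (n:ℝ)) * (D * ((n:ℝ) / L + 1)) := by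
          apply mul_le_mul_of_nonneg_left _ (by positivity)
          apply mul_le_mul_of_nonneg_left _ hDpos.le
          linarith
      _ = D / L + D / n := by field_simp
      _ ≤ D / L + D / L := by
          have : D / (n:ℝ) ≤ D / L := by gcongr
          linarith
      _ = 2 * D / L := by ring
      _ < δ₀ := hLδ
  obtain ⟨z, hz⟩ := hASP xs hpo
  have hbdd : Filter.IsBoundedUnder (· ≤ ·) atTop
      (fun n : ℕ => (1 / (n : ℝ)) * ∑ i ∈ Finset.Icc 1 n, dist (f^[i] z) (xs (i : ℤ))) := by
    apply Filter.isBoundedUnder_of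
    refine ⟨D, fun n => ?_⟩
    rcases Nat.eq_zero_or_pos n with rfl | hn
    · simp [hDpos.le]
    · have hs : ∑ i ∈ Finset.Icc 1 n, dist (f^[i] z) (xs (i : ℤ)) ≤ (n:ℝ) * D := by
        calc ∑ i ∈ Finset.Icc 1 n, dist (f^[i] z) (xs (i : ℤ))
            ≤ ∑ _i ∈ Finset.Icc 1 n, D := Finset.sum_le_sum fun i _ => hDb _ _
          _ = (n:ℝ) * D := by
              rw [Finset.sum_const, Nat.card_Icc, nsmul_eq_mul]
              norm_num
      have hnpos : (0:ℝ) < n := by exact_mod_cast hn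
      calc (1 / (n:ℝ)) * ∑ i ∈ Finset.Icc 1 n, dist (f^[i] z) (xs (i : ℤ))
          ≤ (1 / (n:ℝ)) * ((n:ℝ) * D) := mul_le_mul_of_nonneg_left hs (by positivity)
        _ = D := by field_simp
  have hev : ∀ᶠ n : ℕ in atTop,
      (1 / (n : ℝ)) * ∑ i ∈ Finset.Icc 1 n, dist (f^[i] z) (xs (i : ℤ)) < ε :=
    Filter.eventually_lt_of_limsup_lt hz hbdd
  have hTx : ∀ a : ℕ, ∃ B : ℕ, a < B ∧ ∀ q s : ℕ, s < L →
      (1 ≤ B + 2*L*q + s ∧ (B + 2*L*q + s - 1) % (2*L) < L) := by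
    intro a
    refine ⟨2*L*(a/(2*L)) + 2*L + 1, ?_, ?_⟩
    · have h1 := Nat.div_add_mod a (2*L)
      have h2 : a % (2*L) < 2*L := Nat.mod_lt _ (by omega)
      generalize 2*L*(a/(2*L)) = c at h1 ⊢
      omega
    · intro q s hs
      refine ⟨by omega, ?_⟩
      have he : 2*L*(a/(2*L)) + 2*L + 1 + 2*L*q + s - 1 = 2*L*(a/(2*L) + 1 + q) + s := by
        generalize a/(2*L) = A
        have : 2*L*A + 2*L + 1 + 2*L*q + s = 2*L*(A + 1 + q) + s + 1 := by ring
        omega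
      rw [he, Nat.mul_add_mod, Nat.mod_eq_of_lt (show s < 2*L by omega)]
      exact hs
  have hTy : ∀ a : ℕ, ∃ B : ℕ, a < B ∧ ∀ q s : ℕ, s < L - 1 →
      (1 ≤ B + 2*L*q + s ∧ (L ≤ (B + 2*L*q + s - 1) % (2*L) ∧
        (B + 2*L*q + s - 1) % (2*L) < 2*L - 1)) := by
    intro a
    refine ⟨2*L*(a/(2*L)) + 2*L + L + 1, ?_, ?_⟩
    · have h1 := Nat.div_add_mod a (2*L)
      have h2 : a % (2*L) < 2*L := Nat.mod_lt _ (by omega)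
      generalize 2*L*(a/(2*L)) = c at h1 ⊢
      omega
    · intro q s hs
      refine ⟨by omega, ?_⟩
      have he : 2*L*(a/(2*L)) + 2*L + L + 1 + 2*L*q + s - 1 = 2*L*(a/(2*L) + 1 + q) + (L + s) := by
        generalize a/(2*L) = A
        have : 2*L*A + 2*L + L + 1 + 2*L*q + s = 2*L*(A + 1 + q) + (L + s) + 1 := by ring
        omega
      rw [he, Nat.mul_add_mod, Nat.mod_eq_of_lt (show L + s < 2*L by omega)]
      omega
  have hgx := exists_good (fun i : ℕ => dist (f^[i] z) (xs (i : ℤ))) (fun i => dist_nonneg)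
      (2*L) L (by omega) (by omega) η ε hηpos hεpos
      (by push_cast; rw [hε]; nlinarith [mul_pos hηpos hLcast]) hev
      (fun i => 1 ≤ i ∧ (i - 1) % (2*L) < L) hTx
  obtain ⟨i, hi0, ⟨hi1, hir⟩, hdi⟩ := hgx 0
  have hgy := exists_good (fun i : ℕ => dist (f^[i] z) (xs (i : ℤ))) (fun i => dist_nonneg)
      (2*L) (L-1) (by omega) (by omega) η ε hηpos hεpos
      (by rw [hε]; push_cast [Nat.cast_sub (show 1 ≤ L by omega)]
          nlinarith [hηpos, hLcast, (show (2:ℝ) ≤ L by exact_mod_cast hL2)]) hev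
      (fun i => 1 ≤ i ∧ (L ≤ (i - 1) % (2*L) ∧ (i - 1) % (2*L) < 2*L - 1)) hTy
  obtain ⟨j, hij, ⟨hj1, hjr1, hjr2⟩, hdj⟩ := hgy i
  set r := (i - 1) % (2*L) with hrdef
  have hxi : xs (i:ℤ) = f^[r] x := by
    rw [hxs, pseudo_nat f g x y L i hi1, if_pos hir]
  set rj := (j - 1) % (2*L) with hrjdef
  set s := 2*L - 1 - rj with hsdef
  have hs1 : 1 ≤ s := by omega
  have hxj : xs (j:ℤ) = g^[s] y := by
    rw [hxs, pseudo_nat f g x y L j hj1, if_neg (by omega)]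
  have hdix : dist (f^[i] z) (f^[r] x) < η := by rw [← hxi]; simpa using hdi
  have hdjy : dist (f^[j] z) (g^[s] y) < η := by rw [← hxj]; simpa using hdj
  set c : ℕ → X := fun t =>
    if t ≤ r then f^[t] x
    else if t ≤ r + (j - i) then f^[i + (t - r)] z
    else g^[s - (t - (r + (j - i)))] y with hc
  have hji : 1 ≤ j - i := by omega
  have hc1 : ∀ t, t ≤ r → c t = f^[t] x := by
    intro t ht; simp only [hc]; rw [if_pos ht]
  have hc2 : ∀ t, r < t → t ≤ r + (j - i) → c t = f^[i + (t - r)] z := by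
    intro t h1 h2; simp only [hc]; rw [if_neg (by omega), if_pos h2]
  have hc3 : ∀ t, r + (j - i) < t → c t = g^[s - (t - (r + (j - i)))] y := by
    intro t h1; simp only [hc]; rw [if_neg (by omega), if_neg (by omega)]
  refine ⟨r + (j - i) + s, c, ?_, ?_, ?_⟩
  · rw [hc1 0 (by omega)]; rfl
  · rw [hc3 _ (by omega), show s - (r + (j - i) + s - (r + (j - i))) = 0 from by omega]
    rfl
  · intro t ht
    rcases lt_trichotomy t r with h1 | rfl | h1
    · rw [hc1 t (by omega), hc1 (t+1) (by omega), Function.iterate_succ_apply', dist_self]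
      exact hδ
    · rw [hc1 r le_rfl, hc2 (r+1) (by omega) (by omega),
        show r + 1 - r = 1 from by omega, Function.iterate_succ_apply' f i z]
      exact hUC (lt_trans (by rw [dist_comm]; exact hdix) hηε')
    · rcases lt_trichotomy t (r + (j - i)) with h2 | rfl | h2
      · rw [hc2 t h1 (by omega), hc2 (t+1) (by omega) (by omega),
          show i + (t + 1 - r) = (i + (t - r)) + 1 from by omega,
          Function.iterate_succ_apply', dist_self]
        exact hδ
      · rw [hc2 _ h1 le_rfl, hc3 (r + (j - i) + 1) (by omega),
          show i + (r + (j - i) - r) = j from by omega,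
          show s - (r + (j - i) + 1 - (r + (j - i))) = s - 1 from by omega]
        have hgs : f (g^[s] y) = g^[s-1] y := by
          conv_lhs => rw [show s = (s-1) + 1 from by omega, Function.iterate_succ_apply' g]
          exact hg _
        rw [← hgs]
        exact hUC (lt_trans hdjy hηε')
      · have hu1 : 1 ≤ t - (r + (j - i)) := by omega
        have hus : t - (r + (j - i)) < s := by omega
        rw [hc3 t (by omega), hc3 (t+1) (by omega),
          show t + 1 - (r + (j - i)) = (t - (r + (j - i))) + 1 from by omega,
          show s - (t - (r + (j - i))) = (s - ((t - (r + (j - i))) + 1)) + 1 from by omega,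
          Function.iterate_succ_apply' g, hg, dist_self]
        exact hδ
end

section
/- Let f : X → X be a homeomorphism of a compact metric space that is chain transitive, and suppose p ∈ X is a fixed point which is asymptotically stable (i.e. there is a neighborhood U of p with f(closure(U)) ⊆ U and ⋂_{n≥0} f^n(U) = {p}). Then X = {p}. -/
lemma stay_in_trapping {X : Type*} [MetricSpace X] [CompactSpace X] (f : X → X)
    (hf : Continuous f) (hct : ChainTransitive f) {V : Set X} (hV : IsOpen V)
    (hfV : f '' closure V ⊆ V) (p : X) (hpV : p ∈ V) : ∀ x : X, x ∈ V := by
  have hKcpt : IsCompact (f '' closure V) :=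
    (isClosed_closure.isCompact).image hf
  obtain ⟨δ, hδ, hth⟩ := hKcpt.exists_thickening_subset_open hV hfV
  intro x
  obtain ⟨K, c, hc0, hcK, hch⟩ := hct p x δ hδ
  have key : ∀ j, j ≤ K → c j ∈ V := by
    intro j
    induction j with
    | zero => intro _; rw [hc0]; exact hpV
    | succ n ih =>
      intro hn
      have hcn : c n ∈ V := ih (Nat.le_of_succ_le hn)
      have h1 : f (c n) ∈ f '' closure V := ⟨c n, subset_closure hcn, rfl⟩
      have h2 : dist (f (c n)) (c (n + 1)) < δ := hch n (Nat.lt_of_succ_le hn)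
      apply hth
      rw [Metric.mem_thickening_iff]
      exact ⟨f (c n), h1, by rwa [dist_comm]⟩
  rw [← hcK]
  exact key K le_rfl

theorem stmt_19 {X : Type*} [MetricSpace X] [CompactSpace X] (f : X ≃ₜ X)
    (hct : ChainTransitive f) (p : X) (hp : f p = p)
    (U : Set X) (hU : IsOpen U) (hpU : p ∈ U)
    (hattr : f '' closure U ⊆ U)
    (hsink : (⋂ n : ℕ, (⇑f)^[n] '' U) = {p}) :
    ∀ x : X, x = p := by
  have hopen : ∀ n : ℕ, IsOpen ((⇑f)^[n] '' U) := by
    intro n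
    induction n with
    | zero => simpa using hU
    | succ n ih =>
      rw [Function.iterate_succ', Set.image_comp]
      exact f.isOpenMap _ ih
  have hclosn : ∀ n : ℕ, ∀ s : Set X, closure ((⇑f)^[n] '' s) = (⇑f)^[n] '' closure s := by
    intro n
    induction n with
    | zero => intro s; simp
    | succ n ih =>
      intro s
      have : (⇑f)^[n + 1] '' s = f '' ((⇑f)^[n] '' s) := by
        rw [Function.iterate_succ', Set.image_comp]
      rw [this, ← f.image_closure, ih s, ← Set.image_comp, ← Function.iterate_succ']
  intro x
  have hx : ∀ n : ℕ, x ∈ (⇑f)^[n] '' U := by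
    intro n
    refine stay_in_trapping f f.continuous hct
      (hopen n) ?_ p ⟨p, hpU, Function.iterate_fixed hp n⟩ x
    rw [hclosn n U]
    have : f '' ((⇑f)^[n] '' closure U) = (⇑f)^[n] '' (f '' closure U) := by
      rw [← Set.image_comp, ← Set.image_comp, ← Function.iterate_succ', ← Function.iterate_succ]
    rw [this]
    exact Set.image_mono hattr
  have : x ∈ (⋂ n : ℕ, (⇑f)^[n] '' U) := Set.mem_iInter.2 hx
  rw [hsink] at this
  exact this
end
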